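/- arXiv:math/0607301 — 10 statements merged into one kernel-verified Lean document; each statement's English description precedes it below -/
import Mathlib

section
/- A graph in which every cycle of length at least four has a chord (a chordal graph) that is formed as the union of two chordal graphs whose intersection is a complete graph is itself chordal. -/
/-!
Take a cycle of `G` of length at least four. If it stays inside `S₁` or inside `S₂`, it is a
cycle of a chordal induced subgraph and has a chord there. Otherwise it passes through some
`x ∉ S₂` and some `y ∉ S₁`. Each of the two arcs of the cycle between `x` and `y` leaves `S₁`
along an edge that must lie in `S₂`, so each arc has a vertex of the clique `S₁ ∩ S₂` strictly
between `x` and `y`. These two vertices lie on different arcs, so they are distinct and not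
consecutive on the cycle, and the edge joining them is a chord.
-/

/-- A simple graph is *chordal* if every cycle of length at least four has a chord,
that is, an edge of the graph joining two vertices of the cycle that is not an
edge of the cycle. -/
def SimpleGraph.IsChordal {V : Type*} (G : SimpleGraph V) : Prop :=
  ∀ ⦃v : V⦄ (w : G.Walk v v), w.IsCycle → 4 ≤ w.length →
    ∃ a b, a ∈ w.support ∧ b ∈ w.support ∧ G.Adj a b ∧ s(a, b) ∉ w.edges

namespace SimpleGraph

variable {V W : Type*} {G : SimpleGraph V} {H : SimpleGraph W} {u v x y : V}

theorem isChordal_iff :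
    G.IsChordal ↔ ∀ ⦃v : V⦄ (w : G.Walk v v), w.IsCycle → 4 ≤ w.length → ¬ w.IsChordless := by
  simp only [IsChordal, Walk.isChordless_iff_forall_mem_edges]
  grind

namespace Walk

theorem IsChordless.of_map {f : G →g H} (hf : Function.Injective f) {p : G.Walk u v}
    (hp : (p.map f).IsChordless) : p.IsChordless := by
  rw [isChordless_iff_forall_mem_edges] at hp ⊢
  intro a b ha hb hab
  have hmem := hp (by simpa [support_map] using List.mem_map_of_mem (f := f) ha)
    (by simpa [support_map] using List.mem_map_of_mem (f := f) hb) (f.map_adj hab)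
  rw [edges_map, List.mem_map] at hmem
  obtain ⟨e, he, hfe⟩ := hmem
  rwa [← Sym2.map.injective hf (hfe.trans (Sym2.map_mk f a b).symm)]

theorem isChordless_rotate [DecidableEq V] {c : G.Walk v v} (hu : u ∈ c.support) :
    (c.rotate u hu).IsChordless ↔ c.IsChordless := by
  rw [← isInduced_toSubgraph, ← isInduced_toSubgraph, toSubgraph_rotate]

theorem IsCycle.eq_or_eq_of_mem_support_append {p : G.Walk x y} {q : G.Walk y x}
    (hc : (p.append q).IsCycle) {z : V} (hp : z ∈ p.support) (hq : z ∈ q.support) :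
    z = x ∨ z = y := by
  have hdisj : p.support.tail.Disjoint q.support.tail := by
    have := hc.support_nodup
    rw [tail_support_append] at this
    exact List.disjoint_of_nodup_append this
  rw [mem_support_iff] at hp hq
  rcases hp with rfl | hp
  · exact .inl rfl
  rcases hq with rfl | hq
  · exact .inr rfl
  exact (hdisj hp hq).elim

theorem IsCycle.not_isChordless_append {p : G.Walk x y} {q : G.Walk y x}
    (hc : (p.append q).IsCycle) {a b : V} (ha : a ∈ p.support) (hax : a ≠ x) (hay : a ≠ y)
    (hb : b ∈ q.support) (hbx : b ≠ x) (hby : b ≠ y) (hab : G.Adj a b) :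
    ¬ (p.append q).IsChordless := by
  intro hch
  have hmem := hch.mem_edges (by simp [ha]) (by simp [hb]) hab
  rw [edges_append, List.mem_append] at hmem
  rcases hmem with h | h
  · have := hc.eq_or_eq_of_mem_support_append (p.snd_mem_support_of_mem_edges h) hb
    tauto
  · have := hc.eq_or_eq_of_mem_support_append ha (q.fst_mem_support_of_mem_edges h)
    tauto

theorem exists_mem_support_mem_inter {S T : Set V}
    (hST : ∀ a b, G.Adj a b → (a ∈ S ∧ b ∈ S) ∨ (a ∈ T ∧ b ∈ T))
    (p : G.Walk x y) (hx : x ∈ S) (hy : y ∉ S) : ∃ a ∈ p.support, a ∈ S ∧ a ∈ T := by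
  obtain ⟨d, hd, hd₁, hd₂⟩ := p.exists_boundary_dart S hx hy
  exact ⟨d.fst, p.dart_fst_mem_support_of_mem_darts hd, hd₁,
    ((hST _ _ d.adj).resolve_left fun h => hd₂ h.2).1⟩

end Walk

theorem IsChordal.not_isChordless_of_support_subset {S : Set V} (h : (G.induce S).IsChordal)
    {w : G.Walk v v} (hc : w.IsCycle) (hlen : 4 ≤ w.length) (hS : ∀ z ∈ w.support, z ∈ S) :
    ¬ w.IsChordless := by
  have hw := w.map_induce hS
  refine fun hch => isChordal_iff.mp h (w.induce S hS) (.of_map (hw ▸ hc)) ?_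
    (.of_map Subtype.val_injective (hw ▸ hch))
  rwa [← Walk.length_map (Embedding.induce S).toHom, hw]

end SimpleGraph

/-- **Dirac's theorem on clique sums.** If a graph `G` is the union of two induced
subgraphs on `S₁` and `S₂` (every edge lies within `S₁` or within `S₂`), each of
which is chordal, and the intersection `S₁ ∩ S₂` induces a complete graph, then
`G` is chordal. -/
theorem isChordal_of_union_of_inter_complete {V : Type*} (G : SimpleGraph V)
    (S₁ S₂ : Set V) (hcover : S₁ ∪ S₂ = Set.univ)
    (hedge : ∀ a b : V, G.Adj a b → (a ∈ S₁ ∧ b ∈ S₁) ∨ (a ∈ S₂ ∧ b ∈ S₂))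
    (h₁ : (G.induce S₁).IsChordal) (h₂ : (G.induce S₂).IsChordal)
    (hcomplete : (S₁ ∩ S₂).Pairwise G.Adj) :
    G.IsChordal := by
  classical
  refine SimpleGraph.isChordal_iff.mpr fun v w hc hlen => ?_
  by_cases hw₁ : ∀ z ∈ w.support, z ∈ S₁
  · exact h₁.not_isChordless_of_support_subset hc hlen hw₁
  by_cases hw₂ : ∀ z ∈ w.support, z ∈ S₂
  · exact h₂.not_isChordless_of_support_subset hc hlen hw₂
  push Not at hw₁ hw₂
  obtain ⟨y, hyw, hy₁⟩ := hw₁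
  obtain ⟨x, hxw, hx₂⟩ := hw₂
  have hx₁ : x ∈ S₁ := (Set.eq_univ_iff_forall.mp hcover x).resolve_right hx₂
  have hy₂ : y ∈ S₂ := (Set.eq_univ_iff_forall.mp hcover y).resolve_left hy₁
  set c := w.rotate x hxw
  have hyc : y ∈ c.support := (w.mem_support_rotate_iff x hxw).mpr hyw
  have hcycle : ((c.takeUntil y hyc).append (c.dropUntil y hyc)).IsCycle := by
    rw [c.take_spec hyc]; exact hc.rotate hxw
  obtain ⟨a, ha, ha₁, ha₂⟩ := (c.takeUntil y hyc).exists_mem_support_mem_inter hedge hx₁ hy₁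
  obtain ⟨b, hb, hb₂, hb₁⟩ := (c.dropUntil y hyc).exists_mem_support_mem_inter
    (fun a b h => (hedge a b h).symm) hy₂ hx₂
  have hax : a ≠ x := ne_of_mem_of_not_mem ha₂ hx₂
  have hay : a ≠ y := ne_of_mem_of_not_mem ha₁ hy₁
  have hab : a ≠ b := fun h => (hcycle.eq_or_eq_of_mem_support_append ha (h ▸ hb)).elim hax hay
  have hchord := hcycle.not_isChordless_append ha hax hay hb (ne_of_mem_of_not_mem hb₂ hx₂)
    (ne_of_mem_of_not_mem hb₁ hy₁) (hcomplete ⟨ha₁, ha₂⟩ ⟨hb₁, hb₂⟩ hab)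
  rwa [c.take_spec hyc, SimpleGraph.Walk.isChordless_rotate] at hchord
end

section
/- In a chordal graph, every minimal vertex cut set induces a complete subgraph. -/
/-- `B` is a `(c,f)`-separator of `G`: `c, f ∉ B` and `c` and `f` lie in different
connected components of the induced subgraph `G − B`. -/
def SimpleGraph.IsSeparator {V : Type*} (G : SimpleGraph V) (c f : V) (Bs : Set V) : Prop :=
  ∃ (hc : c ∈ Bsᶜ) (hf : f ∈ Bsᶜ), ¬ (G.induce Bsᶜ).Reachable ⟨c, hc⟩ ⟨f, hf⟩

/-- `B` is a minimal `(c,f)`-separator: no proper subset of `B` is a `(c,f)`-separator. -/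
def SimpleGraph.IsMinSeparator {V : Type*} (G : SimpleGraph V) (c f : V) (Bs : Set V) : Prop :=
  G.IsSeparator c f Bs ∧ ∀ Bs' ⊂ Bs, ¬ G.IsSeparator c f Bs'

/-- `u` and `g` lie in the same connected component of `G − B`. -/
def SimpleGraph.InSepComp {V : Type*} (G : SimpleGraph V) (Bs : Set V) (u g : V) : Prop :=
  ∃ (hu : u ∈ Bsᶜ) (hg : g ∈ Bsᶜ), (G.induce Bsᶜ).Reachable ⟨u, hu⟩ ⟨g, hg⟩

namespace SimpleGraph.Walk

variable {V : Type*} {G : SimpleGraph V} {u v w a b : V}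

theorem IsChordless.reverse {p : G.Walk u v} (hp : p.IsChordless) : p.reverse.IsChordless := by
  rw [isChordless_iff_forall_mem_edges] at hp ⊢
  simpa only [support_reverse, edges_reverse, List.mem_reverse] using hp

theorem IsChordless.append {p : G.Walk u v} {q : G.Walk v w} (hp : p.IsChordless)
    (hq : q.IsChordless)
    (hpq : ∀ a ∈ p.support, a ∉ q.support → ∀ b ∈ q.support, b ∉ p.support → ¬ G.Adj a b) :
    (p.append q).IsChordless := by
  rw [isChordless_iff_forall_mem_edges]
  intro a b ha hb hab
  rw [mem_support_append_iff] at ha hb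
  rw [edges_append, List.mem_append]
  by_cases hp' : a ∈ p.support ∧ b ∈ p.support
  · exact .inl (hp.mem_edges hp'.1 hp'.2 hab)
  by_cases hq' : a ∈ q.support ∧ b ∈ q.support
  · exact .inr (hq.mem_edges hq'.1 hq'.2 hab)
  exfalso
  rcases ha with ha | ha <;> rcases hb with hb | hb
  · exact hp' ⟨ha, hb⟩
  · exact hpq a ha (fun h => hq' ⟨h, hb⟩) b hb (fun h => hp' ⟨ha, h⟩) hab
  · exact hpq b hb (fun h => hq' ⟨ha, h⟩) a ha (fun h => hp' ⟨h, hb⟩) hab.symm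
  · exact hq' ⟨ha, hb⟩

theorem one_lt_length_of_sym2_notMem_edges (p : G.Walk a b) (hab : a ≠ b)
    (he : s(a, b) ∉ p.edges) : 1 < p.length := by
  cases p with
  | nil => exact absurd rfl hab
  | cons h p =>
    cases p with
    | nil => simp at he
    | cons _ _ => simp

theorem exists_length_lt_of_adj_mem_support_right (p : G.Walk u a) (q : G.Walk a v)
    (hb : b ∈ q.support) (hab : G.Adj a b) (he : s(a, b) ∉ q.edges) :
    ∃ r : G.Walk u v, r.length < p.length + q.length ∧ r.support ⊆ (p.append q).support := by
  obtain ⟨q₁, q₂, rfl⟩ := mem_support_iff_exists_append.mp hb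
  have hq₁ : 1 < q₁.length :=
    q₁.one_lt_length_of_sym2_notMem_edges hab.ne fun h => he (by simp [h])
  refine ⟨p.append (cons hab q₂), ?_, fun z hz => ?_⟩
  · simp only [length_append, length_cons]
    omega
  · simp only [mem_support_append_iff, support_cons, List.mem_cons] at hz ⊢
    rcases hz with hz | rfl | hz
    · exact .inl hz
    · exact .inl p.end_mem_support
    · exact .inr (.inr hz)

theorem exists_length_lt_of_adj_of_sym2_notMem_edges (p : G.Walk u v) (ha : a ∈ p.support)
    (hb : b ∈ p.support) (hab : G.Adj a b) (he : s(a, b) ∉ p.edges) :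
    ∃ r : G.Walk u v, r.length < p.length ∧ r.support ⊆ p.support := by
  obtain ⟨p₁, p₂, rfl⟩ := mem_support_iff_exists_append.mp ha
  rw [edges_append, List.mem_append, not_or] at he
  rw [length_append]
  rcases (mem_support_append_iff _ _).mp hb with hb | hb
  · obtain ⟨r, hr, hrs⟩ := exists_length_lt_of_adj_mem_support_right p₂.reverse p₁.reverse
      (by simpa using hb) hab (by simpa using he.1)
    refine ⟨r.reverse, by simpa [add_comm] using hr, fun z hz => ?_⟩
    simpa [← reverse_append] using hrs (by simpa using hz)
  · exact exists_length_lt_of_adj_mem_support_right p₁ p₂ hb hab he.2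

theorem exists_isPath_isChordless_support_subset (p : G.Walk u v) :
    ∃ q : G.Walk u v, q.IsPath ∧ q.IsChordless ∧ q.support ⊆ p.support := by
  classical
  suffices key : ∀ n (p : G.Walk u v), p.IsPath → p.length = n →
      ∃ q : G.Walk u v, q.IsPath ∧ q.IsChordless ∧ q.support ⊆ p.support by
    obtain ⟨q, hq, hqc, hqs⟩ := key _ p.bypass p.bypass_isPath rfl
    exact ⟨q, hq, hqc, List.Subset.trans hqs p.support_bypass_subset_support⟩
  intro n
  induction n using Nat.strong_induction_on with
  | _ n ih =>
    intro p hp hn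
    by_cases hc : p.IsChordless
    · exact ⟨p, hp, hc, List.Subset.refl _⟩
    obtain ⟨a, b, ha, hb, hab, he⟩ : ∃ a b, a ∈ p.support ∧ b ∈ p.support ∧ G.Adj a b ∧
        s(a, b) ∉ p.edges := by
      simpa [isChordless_iff_forall_mem_edges] using hc
    obtain ⟨r, hr, hrs⟩ := p.exists_length_lt_of_adj_of_sym2_notMem_edges ha hb hab he
    obtain ⟨q, hq, hqc, hqs⟩ := ih _ (hn ▸ r.length_bypass_le_length.trans_lt hr) r.bypass
      r.bypass_isPath rfl
    exact ⟨q, hq, hqc,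
      List.Subset.trans hqs (List.Subset.trans r.support_bypass_subset_support hrs)⟩

end SimpleGraph.Walk

namespace SimpleGraph

variable {V : Type*} {G : SimpleGraph V}

theorem Walk.IsPath.isCycle_append_reverse {u v : V} {p q : G.Walk u v} (hp : p.IsPath)
    (hq : q.IsPath) (hpq : ∀ z ∈ p.support, z ∈ q.support → z = u ∨ z = v)
    (hlen : 1 < p.length) : (p.append q.reverse).IsCycle := by
  have hu : u ∉ p.support.tail := by
    have := hp.support_nodup
    rw [← p.cons_tail_support, List.nodup_cons] at this
    exact this.1
  have hv : v ∉ q.reverse.support.tail := by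
    have := hq.reverse.support_nodup
    rw [← q.reverse.cons_tail_support, List.nodup_cons] at this
    exact this.1
  refine hp.isCycle_append hq.reverse (fun z hzp hzq => ?_) (.inl hlen)
  have hzq' : z ∈ q.support := by
    simpa using List.mem_of_mem_tail hzq
  rcases hpq z (List.mem_of_mem_tail hzp) hzq' with rfl | rfl
  · exact hu hzp
  · exact hv hzq

theorem IsChordal.not_isChordless (hG : G.IsChordal) {v : V} {w : G.Walk v v} (hw : w.IsCycle)
    (hlen : 4 ≤ w.length) : ¬ w.IsChordless := by
  obtain ⟨a, b, ha, hb, hab, he⟩ := hG w hw hlen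
  exact fun hc => he (hc.mem_edges ha hb hab)

theorem Reachable.mem_of_forall_adj_mem {s : Set V} (hs : ∀ ⦃a b⦄, a ∈ s → G.Adj a b → b ∈ s)
    {u v : V} (h : G.Reachable u v) (hu : u ∈ s) : v ∈ s := by
  obtain ⟨p⟩ := h
  induction p with
  | nil => exact hu
  | cons hadj _ ih => exact ih (hs hu hadj)

variable {C : Set V} {a b c d u v x y : V}

theorem InSepComp.symm (h : G.InSepComp C u v) : G.InSepComp C v u :=
  ⟨h.2.1, h.1, h.2.2.symm⟩

theorem InSepComp.trans (h : G.InSepComp C u v) (h' : G.InSepComp C v w) : G.InSepComp C u w :=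
  ⟨h.1, h'.2.1, h.2.2.trans h'.2.2⟩

theorem inSepComp_of_adj (hu : u ∉ C) (hv : v ∉ C) (huv : G.Adj u v) : G.InSepComp C u v :=
  ⟨hu, hv, (show (G.induce Cᶜ).Adj ⟨u, hu⟩ ⟨v, hv⟩ from huv).reachable⟩

theorem InSepComp.exists_walk (h : G.InSepComp C u v) :
    ∃ w : G.Walk u v, ∀ z ∈ w.support, G.InSepComp C z v := by
  classical
  obtain ⟨hu, hv, ⟨p⟩⟩ := h
  refine ⟨p.map (Embedding.induce Cᶜ).toHom, fun z hz => ?_⟩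
  obtain ⟨z', hz', rfl⟩ := List.mem_map.mp (Walk.support_map _ p ▸ hz)
  exact ⟨z'.2, hv, ⟨p.dropUntil z' hz'⟩⟩

theorem IsSeparator.symm (h : G.IsSeparator c d C) : G.IsSeparator d c C :=
  ⟨h.2.1, h.1, fun hr => h.2.2 hr.symm⟩

theorem IsSeparator.not_inSepComp (h : G.IsSeparator c d C) : ¬ G.InSepComp C c d :=
  fun ⟨_, _, hr⟩ => h.2.2 hr

theorem IsSeparator.not_adj (h : G.IsSeparator c d C) (ha : G.InSepComp C a c)
    (hb : G.InSepComp C b d) : ¬ G.Adj a b := fun hab =>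
  h.not_inSepComp <| ha.symm.trans <| (inSepComp_of_adj ha.1 hb.1 hab).trans hb

theorem IsMinSeparator.symm (h : G.IsMinSeparator c d C) : G.IsMinSeparator d c C :=
  ⟨h.1.symm, fun C' hC' hsep => h.2 C' hC' hsep.symm⟩

-- Otherwise the component of `c` in `G - C` is also a component of `G - (C \ {x})`.
theorem IsMinSeparator.exists_adj_inSepComp (h : G.IsMinSeparator c d C) (hx : x ∈ C) :
    ∃ a, G.Adj x a ∧ G.InSepComp C a c := by
  by_contra! hnone
  obtain ⟨hc, hd, -⟩ := h.1
  have hc' : c ∉ C \ {x} := fun h => hc h.1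
  have hd' : d ∉ C \ {x} := fun h => hd h.1
  refine h.2 _ (Set.sdiff_singleton_ssubset.mpr hx) ⟨hc', hd', fun hr => ?_⟩
  let S : Set ↥(C \ {x})ᶜ := {z | G.InSepComp C z c}
  have hclosed : ∀ ⦃a b⦄, a ∈ S → (G.induce (C \ {x})ᶜ).Adj a b → b ∈ S := by
    intro a b ha hab
    have hab : G.Adj a b := hab
    have hbx : b.1 ≠ x := fun hbx => hnone a ((congrArg (G.Adj · a) hbx).mp hab.symm) ha
    have hb : b.1 ∉ C := fun hbC => b.2 ⟨hbC, hbx⟩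
    exact (inSepComp_of_adj hb ha.1 hab.symm).trans ha
  exact h.1.not_inSepComp (hr.mem_of_forall_adj_mem hclosed ⟨hc, hc, .rfl⟩).symm

theorem IsMinSeparator.exists_walk_through_comp (h : G.IsMinSeparator c d C) (hx : x ∈ C)
    (hy : y ∈ C) : ∃ w : G.Walk x y, ∀ z ∈ w.support, z = x ∨ z = y ∨ G.InSepComp C z c := by
  obtain ⟨a, hxa, ha⟩ := h.exists_adj_inSepComp hx
  obtain ⟨b, hyb, hb⟩ := h.exists_adj_inSepComp hy
  obtain ⟨w, hw⟩ := (ha.trans hb.symm).exists_walk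
  refine ⟨.cons hxa (w.concat hyb.symm), fun z hz => ?_⟩
  rw [Walk.support_cons, Walk.support_concat, List.mem_cons, List.mem_append,
    List.mem_singleton] at hz
  rcases hz with rfl | hz | rfl
  · exact .inl rfl
  · exact .inr (.inr ((hw z hz).trans hb))
  · exact .inr (.inl rfl)

end SimpleGraph

theorem minimal_cutset_pairwise_adj_general {V : Type*} (G : SimpleGraph V)
    (hch : G.IsChordal)
    (c d : V) (C : Set V) (hmin : G.IsMinSeparator c d C) :
    C.Pairwise G.Adj := by
  intro x hx y hy hxy
  by_contra hadj
  obtain ⟨wc, hwc⟩ := hmin.exists_walk_through_comp hx hy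
  obtain ⟨wd, hwd⟩ := hmin.symm.exists_walk_through_comp hx hy
  obtain ⟨P, hP, hPc, hPs⟩ := wc.exists_isPath_isChordless_support_subset
  obtain ⟨Q, hQ, hQc, hQs⟩ := wd.exists_isPath_isChordless_support_subset
  have inSepComp_c {z} (hz : z ∈ P.support) (hzx : z ≠ x) (hzy : z ≠ y) : G.InSepComp C z c :=
    ((hwc z (hPs hz)).resolve_left hzx).resolve_left hzy
  have inSepComp_d {z} (hz : z ∈ Q.support) (hzx : z ≠ x) (hzy : z ≠ y) : G.InSepComp C z d :=
    ((hwd z (hQs hz)).resolve_left hzx).resolve_left hzy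
  have hPQ : ∀ z ∈ P.support, z ∈ Q.support → z = x ∨ z = y := by
    intro z hzP hzQ
    by_contra! hz
    exact hmin.1.not_inSepComp
      ((inSepComp_c hzP hz.1 hz.2).symm.trans (inSepComp_d hzQ hz.1 hz.2))
  have hlen (R : G.Walk x y) : 1 < R.length :=
    R.one_lt_length_of_sym2_notMem_edges hxy fun h => hadj (R.adj_of_mem_edges h)
  refine hch.not_isChordless (hP.isCycle_append_reverse hQ hPQ (hlen P))
    (by
      simp only [SimpleGraph.Walk.length_append, SimpleGraph.Walk.length_reverse]
      linarith [hlen P, hlen Q])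
    (hPc.append hQc.reverse fun a ha haQ b hb hbP => ?_)
  rw [SimpleGraph.Walk.support_reverse, List.mem_reverse] at haQ hb
  exact hmin.1.not_adj
    (inSepComp_c ha (ne_of_mem_of_not_mem Q.start_mem_support haQ).symm
      (ne_of_mem_of_not_mem Q.end_mem_support haQ).symm)
    (inSepComp_d hb (ne_of_mem_of_not_mem P.start_mem_support hbP).symm
      (ne_of_mem_of_not_mem P.end_mem_support hbP).symm)

/-- **Dirac's theorem.** In a finite connected chordal graph, every minimal cut set
(a set `C` separating a pair of vertices `c, d` such that no proper subset of `C`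
separates the same pair) induces a complete subgraph. -/
theorem minimal_cutset_pairwise_adj {V : Type*} [Fintype V] (G : SimpleGraph V)
    (hconn : G.Connected) (hch : G.IsChordal)
    (c d : V) (C : Set V) (hmin : G.IsMinSeparator c d C) :
    C.Pairwise G.Adj :=
  minimal_cutset_pairwise_adj_general G hch c d C hmin
end

section
/- Let G be a graph and let c, f be nonadjacent vertices of G lying in the same connected component. Then there exists exactly one minimal (c,f)-separator B of G such that every vertex of B is adjacent to c. -/
/-!
Let `B` be the set of neighbours `b` of `c` from which `f` can be reached without passing
through any other neighbour of `c`. Every `c`–`f` walk meets `B` at the last neighbour of `c`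
it visits, so `B` is a separator. Conversely, a separator `S` consisting of neighbours of `c`
must contain every `b ∈ B`: otherwise `c, b` followed by a walk witnessing `b ∈ B` avoids `S`.
Applied to proper subsets of `B` this gives minimality, and applied to a minimal close
separator `S` it gives `B ⊆ S`, hence `B = S`.
-/

namespace SimpleGraph

variable {V : Type*} {G : SimpleGraph V}

lemma reachable_induce_iff {S : Set V} {u v : V} (hu : u ∈ S) (hv : v ∈ S) :
    (G.induce S).Reachable ⟨u, hu⟩ ⟨v, hv⟩ ↔ ∃ p : G.Walk u v, ∀ x ∈ p.support, x ∈ S := by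
  constructor
  · rintro ⟨q⟩
    refine ⟨q.map (Embedding.induce S).toHom, fun x hx => ?_⟩
    obtain ⟨⟨y, hy⟩, -, rfl⟩ := List.mem_map.mp ((Walk.support_map _ _).symm ▸ hx)
    exact hy
  · rintro ⟨p, hp⟩
    exact ⟨p.induce S hp⟩

lemma isSeparator_iff {c f : V} {S : Set V} :
    G.IsSeparator c f S ↔ c ∉ S ∧ f ∉ S ∧ ∀ p : G.Walk c f, ∃ x ∈ p.support, x ∈ S := by
  constructor
  · rintro ⟨hc, hf, hcf⟩
    refine ⟨hc, hf, fun p => ?_⟩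
    by_contra! hp
    exact hcf ((reachable_induce_iff hc hf).mpr ⟨p, hp⟩)
  · rintro ⟨hc, hf, hmeet⟩
    refine ⟨hc, hf, fun hcf => ?_⟩
    obtain ⟨p, hp⟩ := (reachable_induce_iff hc hf).mp hcf
    obtain ⟨x, hx, hxS⟩ := hmeet p
    exact hp x hx hxS

def closeSeparator (G : SimpleGraph V) (c f : V) : Set V :=
  {b | G.Adj c b ∧ ∃ q : G.Walk b f, ∀ z ∈ q.support, G.Adj c z → z = b}

lemma exists_mem_support_mem_closeSeparator {c f : V} :
    ∀ {x : V} (p : G.Walk x f), (∃ y ∈ p.support, G.Adj c y) →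
      ∃ b ∈ p.support, b ∈ G.closeSeparator c f
  | _, .nil, ⟨y, hy, hcy⟩ => by
    rw [Walk.support_nil, List.mem_singleton] at hy
    subst hy
    exact ⟨y, by simp, hcy, .nil, by simp⟩
  | x, .cons hxw q, ⟨y, hy, hcy⟩ => by
    by_cases hq : ∃ z ∈ q.support, G.Adj c z
    · obtain ⟨b, hb, hbB⟩ := exists_mem_support_mem_closeSeparator q hq
      exact ⟨b, by simp [hb], hbB⟩
    · simp only [not_exists, not_and] at hq
      have hyx : y = x := by
        rcases List.mem_cons.mp (Walk.support_cons _ _ ▸ hy) with h | h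
        · exact h
        · exact absurd hcy (hq y h)
      subst hyx
      refine ⟨y, Walk.start_mem_support _, hcy, .cons hxw q, fun z hz hcz => ?_⟩
      rcases List.mem_cons.mp (Walk.support_cons _ _ ▸ hz) with h | h
      · exact h
      · exact absurd hcz (hq z h)

lemma isSeparator_closeSeparator {c f : V} (hne : c ≠ f) (hnadj : ¬ G.Adj c f) :
    G.IsSeparator c f (G.closeSeparator c f) := by
  refine isSeparator_iff.mpr ⟨fun hc => G.irrefl hc.1, fun hf => hnadj hf.1, ?_⟩
  rintro (_ | ⟨hcv, q⟩)
  · exact absurd rfl hne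
  · exact exists_mem_support_mem_closeSeparator _ ⟨_, by simp, hcv⟩

lemma closeSeparator_subset {c f : V} {S : Set V} (hS : G.IsSeparator c f S)
    (hSc : ∀ b ∈ S, G.Adj c b) : G.closeSeparator c f ⊆ S := by
  obtain ⟨hc, -, hmeet⟩ := isSeparator_iff.mp hS
  intro b ⟨hcb, q, hq⟩
  by_contra hbS
  obtain ⟨z, hz, hzS⟩ := hmeet (.cons hcb q)
  rcases List.mem_cons.mp (Walk.support_cons _ _ ▸ hz) with rfl | hzq
  · exact hc hzS
  · exact hbS (hq z hzq (hSc z hzS) ▸ hzS)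

lemma isMinSeparator_closeSeparator {c f : V} (hne : c ≠ f) (hnadj : ¬ G.Adj c f) :
    G.IsMinSeparator c f (G.closeSeparator c f) :=
  ⟨isSeparator_closeSeparator hne hnadj, fun _ hS hSsep =>
    hS.not_subset (closeSeparator_subset hSsep fun _ hb => (hS.subset hb).1)⟩

end SimpleGraph

theorem existsUnique_minSeparator_close_general {V : Type*} (G : SimpleGraph V)
    (c f : V) (hne : c ≠ f) (hnadj : ¬ G.Adj c f) :
    ∃! Bs : Set V, G.IsMinSeparator c f Bs ∧ ∀ b ∈ Bs, G.Adj c b := by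
  refine ⟨G.closeSeparator c f, ⟨G.isMinSeparator_closeSeparator hne hnadj, fun _ hb => hb.1⟩, ?_⟩
  rintro S ⟨⟨hSsep, hSmin⟩, hSc⟩
  have hBS : G.closeSeparator c f ⊆ S := G.closeSeparator_subset hSsep hSc
  obtain h | h := LE.le.eq_or_ssubset hBS
  · exact h.symm
  · exact absurd (G.isSeparator_closeSeparator hne hnadj) (hSmin _ h)

/-- **Kloks–Kratsch, Lemma 4.** If `c` and `f` are distinct nonadjacent vertices of a
finite graph `G` lying in the same connected component, then there exists exactly one
minimal `(c,f)`-separator `B` such that every vertex of `B` is adjacent to `c`. -/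
theorem existsUnique_minSeparator_close {V : Type*} [Finite V] (G : SimpleGraph V)
    (c f : V) (hne : c ≠ f) (hnadj : ¬ G.Adj c f) (hreach : G.Reachable c f) :
    ∃! Bs : Set V, G.IsMinSeparator c f Bs ∧ ∀ b ∈ Bs, G.Adj c b :=
  existsUnique_minSeparator_close_general G c f hne hnadj
end

section
/- Let G be a graph with vertex set S, and let (S₁, S₀, S₂) be a separation of S (S = S₁ ∪ S₂, S₀ = S₁ ∩ S₂, no edges between S₁ − S₀ and S₂ − S₀) such that S₀ induces a complete subgraph. If B ⊆ S₁ is a minimal (c,d)-separator of the induced subgraph on S₁ (with c,d ∈ S₁), then B is a minimal (c,d)-separator of G. -/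
/-!
A walk of `G − B` between two vertices of `S₁` can leave `S₁` only through the clique `S₀`, and
must come back through `S₀` as well; replacing each excursion by the single edge of `S₀` joining
its exit and re-entry vertex yields a walk in `G[S₁] − B`. Hence separators of `G[S₁]` that lie in
`S₁` separate `G` too. Conversely, any `(c,d)`-separator `B'` of `G` meets `S₁` in a separator of
`G[S₁]`, so a proper subset of `B` separating `G` would contradict minimality in `G[S₁]`.
-/

lemma Set.preimage_val_ssubset_of_ssubset_image_val {α : Type*} {S : Set α} {B : Set S}
    {A : Set α} (h : A ⊂ Subtype.val '' B) : Subtype.val ⁻¹' A ⊂ B := by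
  rw [← Set.image_preimage_eq_of_subset (h.subset.trans (Set.image_subset_range _ _))] at h
  exact (Subtype.val_injective.injOn.image_ssubset_image_iff (Set.subset_univ _)
    (Set.subset_univ _)).1 h

namespace SimpleGraph

variable {V : Type*} {G : SimpleGraph V}

lemma mem_of_adj_of_notMem_of_separation {S₁ S₀ S₂ : Set V} (hcover : S₁ ∪ S₂ = Set.univ)
    (hinter : S₁ ∩ S₂ = S₀) (hedge : ∀ a ∈ S₁ \ S₀, ∀ b ∈ S₂ \ S₀, ¬ G.Adj a b)
    ⦃a b : V⦄ (ha : a ∈ S₁) (hb : b ∉ S₁) (hab : G.Adj a b) : a ∈ S₀ := by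
  have hb₂ : b ∈ S₂ := (hcover.symm ▸ Set.mem_univ b : b ∈ S₁ ∪ S₂).resolve_left hb
  by_contra ha₀
  exact hedge a ⟨ha, ha₀⟩ b ⟨hb₂, fun hb₀ => hb (hinter ▸ hb₀).1⟩ hab

section CliqueBoundary

variable {S S₀ X : Set V} (hS₀ : S₀ ⊆ S) (hclique : S₀.Pairwise G.Adj)
  (hbdry : ∀ ⦃a b⦄, a ∈ S → b ∉ S → G.Adj a b → a ∈ S₀)
include hS₀ hclique hbdry

/-- Once a walk ending in `S` has left `S`, it re-enters through the clique `S₀`, so every vertex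
of `X ∩ S₀` reaches its end inside `X ∩ S`. -/
lemma Walk.reachable_induce_inter {u v : X} (p : (G.induce X).Walk u v) (hv : (v : V) ∈ S) :
    (∀ hu : (u : V) ∈ S, (G.induce (X ∩ S)).Reachable ⟨u, u.2, hu⟩ ⟨v, v.2, hv⟩) ∧
    ((u : V) ∉ S → ∀ w (hw : w ∈ X ∩ S₀),
      (G.induce (X ∩ S)).Reachable ⟨w, hw.1, hS₀ hw.2⟩ ⟨v, v.2, hv⟩) := by
  induction p with
  | nil => exact ⟨fun _ => .rfl, fun hu => (hu hv).elim⟩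
  | @cons u y v hadj p ih =>
    obtain ⟨ihS, ihOut⟩ := ih hv
    refine ⟨fun hu => ?_, fun hu w hw => ?_⟩
    · by_cases hy : (y : V) ∈ S
      · exact (show (G.induce (X ∩ S)).Adj ⟨u, u.2, hu⟩ ⟨y, y.2, hy⟩ from
          hadj).reachable.trans (ihS hy)
      · exact ihOut hy u ⟨u.2, hbdry hu hy hadj⟩
    · by_cases hy : (y : V) ∈ S
      · have hy₀ : (y : V) ∈ S₀ := hbdry hy hu hadj.symm
        refine Reachable.trans ?_ (ihS hy)
        rcases eq_or_ne w y with rfl | hne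
        · rfl
        · exact (show (G.induce (X ∩ S)).Adj ⟨w, hw.1, hS₀ hw.2⟩ ⟨y, y.2, hy⟩ from
            hclique hw.2 hy₀ hne).reachable
      · exact ihOut hy w hw

lemma Reachable.induce_inter {u v : V} (hu : u ∈ X ∩ S) (hv : v ∈ X ∩ S)
    (h : (G.induce X).Reachable ⟨u, hu.1⟩ ⟨v, hv.1⟩) :
    (G.induce (X ∩ S)).Reachable ⟨u, hu⟩ ⟨v, hv⟩ :=
  h.elim fun p => (p.reachable_induce_inter hS₀ hclique hbdry hv.2).1 hu.2

lemma IsSeparator.image_val_of_induce {c d : V} {hc : c ∈ S} {hd : d ∈ S} {B : Set S}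
    (h : (G.induce S).IsSeparator ⟨c, hc⟩ ⟨d, hd⟩ B) : G.IsSeparator c d (Subtype.val '' B) := by
  obtain ⟨hcB, hdB, hnr⟩ := h
  have hc' : c ∉ Subtype.val '' B := fun h => hcB (Subtype.val_injective.mem_set_image.1 h)
  have hd' : d ∉ Subtype.val '' B := fun h => hdB (Subtype.val_injective.mem_set_image.1 h)
  refine ⟨hc', hd', fun hr => hnr ?_⟩
  let φ : G.induce ((Subtype.val '' B)ᶜ ∩ S) →g (G.induce S).induce Bᶜ :=
    ⟨fun x => ⟨⟨x, x.2.2⟩, fun hx => x.2.1 ⟨_, hx, rfl⟩⟩, id⟩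
  exact (hr.induce_inter hS₀ hclique hbdry ⟨hc', hc⟩ ⟨hd', hd⟩).map φ

end CliqueBoundary

lemma IsSeparator.induce {S B : Set V} {c d : V} (hc : c ∈ S) (hd : d ∈ S)
    (h : G.IsSeparator c d B) :
    (G.induce S).IsSeparator ⟨c, hc⟩ ⟨d, hd⟩ (Subtype.val ⁻¹' B) :=
  let ⟨hcB, hdB, hnr⟩ := h
  ⟨hcB, hdB, fun hr => hnr (hr.map
    (⟨fun x => ⟨x.1, x.2⟩, id⟩ : (G.induce S).induce (Subtype.val ⁻¹' B)ᶜ →g G.induce Bᶜ))⟩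

end SimpleGraph

/-- If `(S₁, S₀, S₂)` is a separation of the vertex set of `G` with `S₀` inducing a
complete subgraph, and `B ⊆ S₁` is a minimal `(c,d)`-separator of the induced
subgraph on `S₁`, then `B` is a minimal `(c,d)`-separator of `G`. -/
theorem isMinSeparator_of_induce {V : Type*} (G : SimpleGraph V)
    (S₁ S₀ S₂ : Set V) (hcover : S₁ ∪ S₂ = Set.univ) (hinter : S₁ ∩ S₂ = S₀)
    (hedge : ∀ a ∈ S₁ \ S₀, ∀ b ∈ S₂ \ S₀, ¬ G.Adj a b)
    (hclique : S₀.Pairwise G.Adj)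
    (c d : V) (hc : c ∈ S₁) (hd : d ∈ S₁) (B₁ : Set S₁)
    (hmin : (G.induce S₁).IsMinSeparator ⟨c, hc⟩ ⟨d, hd⟩ B₁) :
    G.IsMinSeparator c d (Subtype.val '' B₁) := by
  have hS₀ : S₀ ⊆ S₁ := hinter ▸ Set.inter_subset_left
  refine ⟨hmin.1.image_val_of_induce hS₀ hclique
    (SimpleGraph.mem_of_adj_of_notMem_of_separation hcover hinter hedge), fun B hB hsep => ?_⟩
  exact hmin.2 _ (Set.preimage_val_ssubset_of_ssubset_image_val hB) (hsep.induce hc hd)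
end

section
/- In a Coxeter system (W,S), if A ⊆ S and r ∈ ⟨A⟩ is conjugate in W to an element of S, then r is conjugate in ⟨A⟩ to an element of A. -/
/-!
The proof uses the reflection cocycle (Björner–Brenti, *Combinatorics of Coxeter Groups*, §1.4).
Let the simple reflection `sᵢ` act on `W × ZMod 2` by `(x, c) ↦ (sᵢ x sᵢ, c + [x = sᵢ])`. A word `ω`
then acts by `(x, c) ↦ (y, c + #{occurrences of y in the left inversion sequence of ω})`, where
`y = (π ω) x (π ω)⁻¹`. The left inversion sequence of the braid word `(sᵢ sⱼ)^mᵢⱼ` is periodic of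
period `mᵢⱼ`, so the Coxeter relations hold and this is an action of `W`. Each element acts by
translating the second coordinate by an amount depending only on the first, so `r = w sᵢ w⁻¹` flips
the second coordinate of `(r, c)` because `sᵢ` flips that of `(sᵢ, c)`. Hence if a reflection `r` is a
product `π ω` of generators from `A`, it occurs an odd number of times in the left inversion sequence
of `ω`, whose entries are conjugates of letters of `ω` by prefixes of `ω`.
-/

open List

namespace CoxeterSystem

variable {B W : Type*} [Group W] {M : CoxeterMatrix B} (cs : CoxeterSystem M W)

local prefix:100 "s" => cs.simple
local prefix:100 "π" => cs.wordProd
local prefix:100 "lis" => cs.leftInvSeq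

theorem prod_map_alternatingWord_two_mul {G : Type*} [Monoid G] (f : B → G) (i j : B) (p : ℕ) :
    (map f (alternatingWord i j (2 * p))).prod = (f i * f j) ^ p := by
  induction p with
  | zero => simp [alternatingWord]
  | succ p ih =>
    rw [show 2 * (p + 1) = 2 * p + 1 + 1 by ring, alternatingWord_succ', alternatingWord_succ']
    simp [ih, pow_succ', mul_assoc]

theorem leftInvSeq_alternatingWord_two_mul (i j : B) (p : ℕ) :
    lis (alternatingWord i j (2 * p)) = (range (2 * p)).map fun k ↦ s i * (s j * s i) ^ k := by
  refine ext_getElem (by simp) fun k hk _ ↦ ?_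
  rw [getElem_leftInvSeq_alternatingWord cs i j p k (by simpa using hk), getElem_map,
    getElem_range, prod_alternatingWord_eq_mul_pow]
  simp [show (2 * k + 1) / 2 = k by omega]

theorem even_count_leftInvSeq_alternatingWord [DecidableEq W] (i j : B) (t : W) :
    Even (count t (lis (alternatingWord i j (2 * M i j)))) := by
  have hperiod (k : ℕ) : (s j * s i) ^ (M i j + k) = (s j * s i) ^ k := by
    rw [pow_add, M.symmetric, simple_mul_simple_pow, one_mul]
  rw [leftInvSeq_alternatingWord_two_mul, two_mul, range_add, map_append, map_map]
  simp only [Function.comp_def, hperiod, count_append]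
  exact ⟨_, rfl⟩

theorem conj_simple_eq_simple_iff {i : B} {x : W} : MulAut.conj (s i) x = s i ↔ x = s i := by
  simp [mul_assoc, mul_eq_one_iff_eq_inv]

section Cocycle

variable [DecidableEq W]

/-- `W × ZMod 2` stands for Björner–Brenti's `T × {±1}`; letting the first factor be all of `W`
avoids a subtype of reflections. -/
def cocyclePerm (i : B) : Equiv.Perm (W × ZMod 2) :=
  Function.Involutive.toPerm (fun p ↦ (MulAut.conj (s i) p.1, p.2 + if p.1 = s i then 1 else 0))
    fun ⟨x, c⟩ ↦ Prod.ext (by simp [mul_assoc]) <| by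
      simp only [conj_simple_eq_simple_iff, add_assoc, CharTwo.add_self_eq_zero, add_zero]

@[simp]
theorem cocyclePerm_apply (i : B) (x : W) (c : ZMod 2) :
    cs.cocyclePerm i (x, c) = (MulAut.conj (s i) x, c + if x = s i then 1 else 0) := rfl

theorem prod_map_cocyclePerm_apply (ω : List B) (x : W) (c : ZMod 2) :
    (ω.map cs.cocyclePerm).prod (x, c) =
      (π ω * x * (π ω)⁻¹, c + count (π ω * x * (π ω)⁻¹) (lis ω)) := by
  induction ω with
  | nil => simp
  | cons i ω ih =>
    set y := π ω * x * (π ω)⁻¹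
    have hy : π (i :: ω) * x * (π (i :: ω))⁻¹ = MulAut.conj (s i) y := by
      simp [y, wordProd_cons, mul_assoc]
    have hcount : count (MulAut.conj (s i) y) (lis (i :: ω)) =
        count y (lis ω) + if y = s i then 1 else 0 := by
      simp only [leftInvSeq, count_cons, count_map_of_injective _ _ (MulEquiv.injective _),
        beq_iff_eq, eq_comm (a := s i), conj_simple_eq_simple_iff]
    rw [map_cons, prod_cons, Equiv.Perm.mul_apply, ih, cocyclePerm_apply, hy, hcount]
    simp [add_assoc]

theorem isLiftable_cocyclePerm : M.IsLiftable cs.cocyclePerm := by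
  intro i j
  ext1 ⟨x, c⟩
  have hbraid : π (alternatingWord i j (2 * M i j)) = 1 := by
    simp [prod_alternatingWord_eq_mul_pow, simple_mul_simple_pow]
  rw [← prod_map_alternatingWord_two_mul, prod_map_cocyclePerm_apply, hbraid, one_mul, inv_one,
    mul_one, (ZMod.natCast_eq_zero_iff_even).mpr (cs.even_count_leftInvSeq_alternatingWord i j x), add_zero]
  rfl

noncomputable def cocycleRep : W →* Equiv.Perm (W × ZMod 2) :=
  cs.lift ⟨cs.cocyclePerm, cs.isLiftable_cocyclePerm⟩

theorem cocycleRep_simple (i : B) : cs.cocycleRep (s i) = cs.cocyclePerm i :=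
  cs.lift_apply_simple cs.isLiftable_cocyclePerm i

theorem cocycleRep_wordProd (ω : List B) : cs.cocycleRep (π ω) = (ω.map cs.cocyclePerm).prod := by
  simp [wordProd, map_list_prod, Function.comp_def, cocycleRep_simple]

theorem cocycleRep_apply_fst (w : W) (p : W × ZMod 2) : (cs.cocycleRep w p).1 = w * p.1 * w⁻¹ := by
  obtain ⟨ω, rfl⟩ := cs.wordProd_surjective w
  rw [cocycleRep_wordProd, prod_map_cocyclePerm_apply]

theorem cocycleRep_apply_add_snd (w x : W) (c d : ZMod 2) :
    cs.cocycleRep w (x, c + d) = ((cs.cocycleRep w (x, c)).1, (cs.cocycleRep w (x, c)).2 + d) := by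
  obtain ⟨ω, rfl⟩ := cs.wordProd_surjective w
  simp only [cocycleRep_wordProd, prod_map_cocyclePerm_apply, add_right_comm]

theorem cocycleRep_apply_self {r : W} (hr : cs.IsReflection r) (c : ZMod 2) :
    cs.cocycleRep r (r, c) = (r, c + 1) := by
  obtain ⟨w, i, rfl⟩ := hr
  set d := (cs.cocycleRep w⁻¹ (w * s i * w⁻¹, c)).2
  have hinv : cs.cocycleRep w⁻¹ (w * s i * w⁻¹, c) = (s i, d) :=
    Prod.ext (by rw [cocycleRep_apply_fst]; group) rfl
  have hback : cs.cocycleRep w (s i, d) = (w * s i * w⁻¹, c) := by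
    rw [← hinv, ← Equiv.Perm.mul_apply, ← map_mul, mul_inv_cancel, map_one, Equiv.Perm.one_apply]
  calc cs.cocycleRep (w * s i * w⁻¹) (w * s i * w⁻¹, c)
      = cs.cocycleRep w (cs.cocycleRep (s i) (s i, d)) := by
        rw [map_mul, map_mul, Equiv.Perm.mul_apply, Equiv.Perm.mul_apply, hinv]
    _ = cs.cocycleRep w (s i, d + 1) := by simp [cocycleRep_simple]
    _ = (w * s i * w⁻¹, c + 1) := by rw [cocycleRep_apply_add_snd, hback]

theorem odd_count_leftInvSeq_of_isReflection {ω : List B} (hr : cs.IsReflection (π ω)) :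
    Odd (count (π ω) (lis ω)) := by
  have h := congrArg Prod.snd (cs.cocycleRep_apply_self hr 0)
  rw [cocycleRep_wordProd, prod_map_cocyclePerm_apply, mul_inv_cancel_right] at h
  exact ZMod.natCast_eq_one_iff_odd.mp (by simpa using h)

end Cocycle

theorem exists_wordProd_eq_of_mem_closure {A : Set B} {w : W}
    (hw : w ∈ Subgroup.closure (cs.simple '' A)) : ∃ ω : List B, (∀ i ∈ ω, i ∈ A) ∧ π ω = w := by
  induction hw using Subgroup.closure_induction_left with
  | one => exact ⟨[], by simp, rfl⟩
  | mul_left _ hx _ _ ih =>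
    obtain ⟨a, ha, rfl⟩ := hx
    obtain ⟨ω, hω, rfl⟩ := ih
    exact ⟨a :: ω, by simpa [ha] using hω, wordProd_cons ..⟩
  | inv_mul_cancel _ hx _ _ ih =>
    obtain ⟨a, ha, rfl⟩ := hx
    obtain ⟨ω, hω, rfl⟩ := ih
    exact ⟨a :: ω, by simpa [ha] using hω, by rw [inv_simple, wordProd_cons]⟩

theorem exists_conj_of_mem_leftInvSeq {A : Set B} {ω : List B} (hω : ∀ i ∈ ω, i ∈ A) {t : W}
    (ht : t ∈ lis ω) : ∃ u ∈ Subgroup.closure (cs.simple '' A), ∃ a ∈ A, t = u * s a * u⁻¹ := by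
  induction ω generalizing t with
  | nil => simp at ht
  | cons i ω ih =>
    have hi : s i ∈ Subgroup.closure (cs.simple '' A) :=
      Subgroup.subset_closure ⟨i, hω i mem_cons_self, rfl⟩
    rcases mem_cons.mp ht with rfl | ht
    · exact ⟨1, one_mem _, i, hω i mem_cons_self, by group⟩
    · obtain ⟨t', ht', rfl⟩ := mem_map.mp ht
      obtain ⟨u, hu, a, ha, rfl⟩ := ih (fun j hj ↦ hω j (mem_cons_of_mem i hj)) ht'
      exact ⟨s i * u, mul_mem hi hu, a, ha, by simp [MulAut.conj_apply, mul_assoc, inv_simple]⟩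

end CoxeterSystem

/-- In a Coxeter system `(W,S)`, a reflection of `(W,S)` (a conjugate of a simple
reflection) lying in the visual subgroup `⟨A⟩`, `A ⊆ S`, is a reflection of the
Coxeter system `(⟨A⟩, A)`: it is conjugate in `⟨A⟩` to an element of `A`. -/
theorem isReflection_of_mem_visual {B W : Type*} [Group W] {M : CoxeterMatrix B}
    (cs : CoxeterSystem M W) (A : Set B) (r : W)
    (hr : cs.IsReflection r)
    (hrA : r ∈ Subgroup.closure (cs.simple '' A)) :
    ∃ u ∈ Subgroup.closure (cs.simple '' A), ∃ a ∈ A, r = u * cs.simple a * u⁻¹ := by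
  classical
  obtain ⟨ω, hωA, rfl⟩ := cs.exists_wordProd_eq_of_mem_closure hrA
  have hmem : cs.wordProd ω ∈ cs.leftInvSeq ω :=
    count_pos_iff.mp (cs.odd_count_leftInvSeq_of_isReflection hr).pos
  exact cs.exists_conj_of_mem_leftInvSeq hωA hmem
end

section
/- Let W be a Coxeter group with two Coxeter generating sets S and S'. If every element of S' is conjugate in W to an element of S, then the set of W-conjugates of elements of S' equals the set of W-conjugates of elements of S. -/
/-- `S` is a set of Coxeter generators for the group `W`: there is a Coxeter matrix
indexed by `S` and a Coxeter system for `W` over that matrix whose simple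
reflections are precisely the elements of `S`. -/
def IsCoxeterGeneratingSet {W : Type*} [Group W] (S : Set W) : Prop :=
  ∃ M : CoxeterMatrix S, ∃ cs : CoxeterSystem M W, ∀ s : S, cs.simple s = (s : W)

/-- The set of `W`-conjugates of the elements of a subset `S` of `W`. -/
def conjugatesOfSet {W : Type*} [Group W] (S : Set W) : Set W :=
  {x | ∃ w : W, ∃ s ∈ S, x = w * s * w⁻¹}

/-- If two involutions satisfy `(s*t)^(2k+1) = 1`, they are conjugate. -/
theorem isConj_of_odd_pow {G : Type*} [Group G] {s t : G} {k : ℕ}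
    (hs : s * s = 1) (ht : t * t = 1) (hst : (s * t) ^ (2 * k + 1) = 1) :
    IsConj s t := by
  rw [isConj_iff]
  refine ⟨(s * t) ^ k, ?_⟩
  have hsinv : s⁻¹ = s := inv_eq_of_mul_eq_one_right hs
  have htinv : t⁻¹ = t := inv_eq_of_mul_eq_one_right ht
  have hpowinv : ((s * t) ^ k)⁻¹ = (t * s) ^ k := by
    rw [← inv_pow, mul_inv_rev, hsinv, htinv]
  rw [hpowinv]
  -- semiconjugation : s * (t*s)^k = (s*t)^k * s
  have hsc : s * (t * s) ^ k = (s * t) ^ k * s := by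
    have : SemiconjBy s (t * s) (s * t) := by
      unfold SemiconjBy; group
    simpa [SemiconjBy] using this.pow_right k
  have h2k : (s * t) ^ (2 * k) = t * s := by
    have h1 : (s * t) ^ (2 * k) * (s * t) = 1 := by
      rw [← pow_succ]; exact hst
    have h2 : (s * t) ^ (2 * k) = (s * t)⁻¹ := eq_inv_of_mul_eq_one_left h1
    rw [h2, mul_inv_rev, hsinv, htinv]
  calc (s * t) ^ k * s * (t * s) ^ k
      = (s * t) ^ k * (s * (t * s) ^ k) := by group
    _ = (s * t) ^ k * ((s * t) ^ k * s) := by rw [hsc]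
    _ = (s * t) ^ (2 * k) * s := by rw [← mul_assoc, ← pow_add]; ring_nf
    _ = t * s * s := by rw [h2k]
    _ = t := by rw [mul_assoc, hs, mul_one]

/-- **Brady–McCammond–Mühlherr–Neumann, Lemma 3.7.** If `S` and `S'` are two Coxeter
generating sets for a Coxeter group `W` and every element of `S'` is conjugate to an
element of `S`, then `(S')^W = S^W`. -/
theorem conjugatesOfSet_eq_of_subset {W : Type*} [Group W] (S S' : Set W)
    (hS : IsCoxeterGeneratingSet S) (hS' : IsCoxeterGeneratingSet S')
    (h : S' ⊆ conjugatesOfSet S) :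
    conjugatesOfSet S' = conjugatesOfSet S := by
  obtain ⟨M, cs, hsimp⟩ := hS
  obtain ⟨M', cs', hsimp'⟩ := hS'
  -- key claim : every element of S is a conjugate of an element of S'
  have key : ∀ s₀ ∈ S, s₀ ∈ conjugatesOfSet S' := by
    intro s₀ hs₀mem
    by_contra hs₀
    classical
    -- the sign-like character detecting the conjugacy class of s₀
    set f : S → Multiplicative (ZMod 2) :=
      fun i => if IsConj s₀ (i : W) then Multiplicative.ofAdd 1 else 1 with hf
    have sq1 : ∀ u : Multiplicative (ZMod 2), u * u = 1 := by decide
    have hlift : M.IsLiftable f := by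
      intro i j
      rcases Nat.even_or_odd (M.M i j) with ⟨k, hk⟩ | ⟨k, hk⟩
      · rw [hk, pow_add]
        exact sq1 _
      · -- odd case: i and j are conjugate, so f i = f j
        have hconj : IsConj (i : W) (j : W) := by
          have h1 : (i : W) * (i : W) = 1 := by
            rw [← hsimp i]; exact cs.simple_mul_simple_self i
          have h2 : (j : W) * (j : W) = 1 := by
            rw [← hsimp j]; exact cs.simple_mul_simple_self j
          have h3 : ((i : W) * (j : W)) ^ (2 * k + 1) = 1 := by
            rw [← hsimp i, ← hsimp j, ← hk]
            exact cs.simple_mul_simple_pow i j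
          exact isConj_of_odd_pow h1 h2 h3
        have hfij : f i = f j := by
          rw [hf]
          simp only
          exact if_congr ⟨fun hc => hc.trans hconj, fun hc => hc.trans hconj.symm⟩ rfl rfl
        rw [hfij, hk]
        rw [sq1 (f j), one_pow]
    set ψ : W →* Multiplicative (ZMod 2) := cs.lift ⟨f, hlift⟩ with hψ
    have hψS : ∀ s ∈ S, ψ s = if IsConj s₀ s then Multiplicative.ofAdd 1 else 1 := by
      intro s hs
      have : ψ (cs.simple ⟨s, hs⟩) = f ⟨s, hs⟩ := cs.lift_apply_simple hlift ⟨s, hs⟩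
      rwa [hsimp ⟨s, hs⟩] at this
    -- ψ is trivial on S'
    have hψS' : ∀ y ∈ S', ψ y = 1 := by
      intro y hy
      obtain ⟨u, s, hsS, huy⟩ := h hy
      have hnc : ¬ IsConj s₀ s := by
        intro hc
        apply hs₀
        have hc2 : IsConj s₀ y := by
          refine hc.trans ?_
          rw [isConj_iff]
          exact ⟨u, huy.symm⟩
        obtain ⟨c, hc3⟩ := isConj_iff.mp hc2
        exact ⟨c⁻¹, y, hy, by rw [← hc3]; group⟩
      have : ψ s = 1 := by rw [hψS s hsS, if_neg hnc]
      rw [huy, map_mul, map_mul, map_inv, this, mul_one,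
        mul_inv_cancel]
    -- hence ψ is trivial everywhere
    have hψall : ∀ w : W, ψ w = 1 := by
      intro w
      refine cs'.simple_induction (p := fun w => ψ w = 1) w (fun i => ?_) (map_one ψ)
        (fun w w' hw hw' => show ψ (w * w') = 1 by rw [map_mul, hw, hw', mul_one])
      rw [hsimp' i]
      exact hψS' (i : W) i.2
    have h1 : ψ s₀ = Multiplicative.ofAdd 1 := by
      rw [hψS s₀ hs₀mem, if_pos (IsConj.refl s₀)]
    rw [hψall s₀] at h1
    exact absurd h1.symm (by decide)
  -- now conclude the set equality
  ext x
  constructor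
  · rintro ⟨w, s', hs', rfl⟩
    obtain ⟨u, s, hs, rfl⟩ := h hs'
    exact ⟨w * u, s, hs, by group⟩
  · rintro ⟨w, s, hs, rfl⟩
    obtain ⟨u, s', hs', rfl⟩ := key s hs
    exact ⟨w * u, s', hs', by group⟩
end

section
/- Let (W,S) be a Coxeter system with a separation (S₁, S₀, S₂) of S. If S_i' is a set of Coxeter generators for ⟨S_i⟩ for i = 0,1,2 such that S₀' ⊆ S₁' and S₀' ⊆ S₂', then S' = S₁' ∪ S₂' is a set of Coxeter generators for W. -/
/-- `T` is a set of Coxeter generators for the subgroup `H` of `W`. -/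
def IsCoxeterGeneratingSetOfSubgroup {W : Type*} [Group W] (H : Subgroup W)
    (T : Set W) : Prop :=
  T ⊆ H ∧ IsCoxeterGeneratingSet {x : H | (x : W) ∈ T}

lemma IsCoxeterGeneratingSet.closure_eq_top' {W : Type*} [Group W] {S : Set W}
    (h : IsCoxeterGeneratingSet S) : Subgroup.closure S = ⊤ := by
  obtain ⟨M, cs, hcs⟩ := h
  have h2 : cs.simple = fun s : S => (s : W) := funext hcs
  have := cs.subgroup_closure_range_simple
  rwa [h2, Subtype.range_coe] at this

lemma closure_eq_of_gen' {W : Type*} [Group W] (H : Subgroup W) (T : Set W)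
    (hT : T ⊆ H) (h : Subgroup.closure {x : H | (x : W) ∈ T} = ⊤) :
    Subgroup.closure T = H := by
  have h2 := congrArg (Subgroup.map H.subtype) h
  rw [MonoidHom.map_closure, ← MonoidHom.range_eq_map, Subgroup.range_subtype] at h2
  have himg : H.subtype '' {x : H | (x : W) ∈ T} = T := by
    ext w
    constructor
    · rintro ⟨x, hx, rfl⟩; exact hx
    · intro hw; exact ⟨⟨w, hT hw⟩, hw, rfl⟩
  rwa [himg] at h2

lemma orderOf_mul_comm' {W : Type*} [Group W] (a b : W) :
    orderOf (a * b) = orderOf (b * a) :=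
  (SemiconjBy.orderOf_eq a (by simp [SemiconjBy, mul_assoc])).symm


/-- Let `(W,S)` be a Coxeter system with a separation `(S₁, S₀, S₂)` of `S`
(`S = S₁ ∪ S₂`, `S₀ = S₁ ∩ S₂`, both differences nonempty, and `a·b` of infinite
order for `a ∈ S₁ − S₀`, `b ∈ S₂ − S₀`). If `Sᵢ'` is a set of Coxeter generators
for `⟨Sᵢ⟩` for `i = 0,1,2` with `S₀' ⊆ S₁'` and `S₀' ⊆ S₂'`, then `S₁' ∪ S₂'` is a
set of Coxeter generators for `W`. -/
theorem isCoxeterGeneratingSet_union {W : Type*} [Group W]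
    (S S₁ S₀ S₂ : Set W) (hS : IsCoxeterGeneratingSet S)
    (hcover : S₁ ∪ S₂ = S) (hinter : S₁ ∩ S₂ = S₀)
    (hne₁ : (S₁ \ S₀).Nonempty) (hne₂ : (S₂ \ S₀).Nonempty)
    (hinf : ∀ a ∈ S₁ \ S₀, ∀ b ∈ S₂ \ S₀, orderOf (a * b) = 0)
    (S₀' S₁' S₂' : Set W)
    (h₀ : IsCoxeterGeneratingSetOfSubgroup (Subgroup.closure S₀) S₀')
    (h₁ : IsCoxeterGeneratingSetOfSubgroup (Subgroup.closure S₁) S₁')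
    (h₂ : IsCoxeterGeneratingSetOfSubgroup (Subgroup.closure S₂) S₂')
    (h₀₁ : S₀' ⊆ S₁') (h₀₂ : S₀' ⊆ S₂') :
    IsCoxeterGeneratingSet (S₁' ∪ S₂') := by
  classical
  have hStop := hS.closure_eq_top'
  have hW₀ : Subgroup.closure S₀' = Subgroup.closure S₀ :=
    closure_eq_of_gen' _ _ h₀.1 h₀.2.closure_eq_top'
  have hW₁ : Subgroup.closure S₁' = Subgroup.closure S₁ :=
    closure_eq_of_gen' _ _ h₁.1 h₁.2.closure_eq_top'
  have hW₂ : Subgroup.closure S₂' = Subgroup.closure S₂ :=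
    closure_eq_of_gen' _ _ h₂.1 h₂.2.closure_eq_top'
  obtain ⟨M, cs, hcs⟩ := hS
  obtain ⟨hsub₁, M₁, cs₁, hcs₁⟩ := h₁
  obtain ⟨hsub₂, M₂, cs₂, hcs₂⟩ := h₂
  -- squares of elements of S₁' ∪ S₂' are 1
  have hsq : ∀ w ∈ S₁' ∪ S₂', w * w = 1 := by
    rintro w (hw | hw)
    · have h := cs₁.simple_mul_simple_self ⟨⟨w, hsub₁ hw⟩, hw⟩
      rw [hcs₁] at h
      exact congrArg Subtype.val h
    · have h := cs₂.simple_mul_simple_self ⟨⟨w, hsub₂ hw⟩, hw⟩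
      rw [hcs₂] at h
      exact congrArg Subtype.val h
  -- the new Coxeter matrix
  set M' : CoxeterMatrix ↥(S₁' ∪ S₂') :=
    { M := Matrix.of fun i j => orderOf ((i : W) * (j : W))
      isSymm := by
        ext i j
        exact orderOf_mul_comm' (j : W) (i : W)
      diagonal := fun i => by
        simp only [Matrix.of_apply]
        rw [hsq _ i.2, orderOf_one]
      off_diagonal := fun i j hij => by
        simp only [Matrix.of_apply]
        rw [Ne, orderOf_eq_one_iff]
        intro h1
        apply hij
        have : (j : W) = (i : W) := by
          have hi := hsq _ i.2
          calc (j : W) = ((i : W) * (i : W)) * (j : W) := by rw [hi, one_mul]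
          _ = (i : W) * ((i : W) * (j : W)) := by group
          _ = (i : W) := by rw [h1, mul_one]
        exact Subtype.ext this.symm } with hM'
  have hM'apply : ∀ i j : ↥(S₁' ∪ S₂'), M' i j = orderOf ((i : W) * (j : W)) := fun i j => rfl
  -- the homomorphism f : M'.Group →* W
  have hfl : CoxeterMatrix.IsLiftable M' (fun i : ↥(S₁' ∪ S₂') => (i : W)) := by
    intro i j
    rw [hM'apply]
    exact pow_orderOf_eq_one _
  set f : M'.Group →* W := M'.toCoxeterSystem.lift ⟨_, hfl⟩ with hf
  have hfsimple : ∀ i : ↥(S₁' ∪ S₂'), f (M'.simple i) = (i : W) := by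
    intro i
    rw [hf, ← CoxeterMatrix.toCoxeterSystem_simple]
    exact M'.toCoxeterSystem.lift_apply_simple hfl i
  -- the homomorphisms φ₁, φ₂
  have pf₁ : CoxeterMatrix.IsLiftable M₁
      (fun i : {x : ↥(Subgroup.closure S₁) | (x : W) ∈ S₁'} =>
        M'.simple ⟨((i : ↥(Subgroup.closure S₁)) : W), Set.mem_union_left _ i.2⟩) := by
    intro i j
    have hrel : (((i : ↥(Subgroup.closure S₁)) : W) * ((j : ↥(Subgroup.closure S₁)) : W))
        ^ (M₁ i j) = 1 := by
      have h := cs₁.simple_mul_simple_pow i j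
      rw [hcs₁, hcs₁] at h
      have h2 := congrArg Subtype.val h
      push_cast at h2
      exact h2
    have hdvd : orderOf (((i : ↥(Subgroup.closure S₁)) : W) *
        ((j : ↥(Subgroup.closure S₁)) : W)) ∣ M₁ i j := orderOf_dvd_of_pow_eq_one hrel
    obtain ⟨k, hk⟩ := hdvd
    rw [hk, pow_mul]
    have := M'.toCoxeterSystem.simple_mul_simple_pow
      ⟨((i : ↥(Subgroup.closure S₁)) : W), Set.mem_union_left _ i.2⟩
      ⟨((j : ↥(Subgroup.closure S₁)) : W), Set.mem_union_left _ j.2⟩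
    rw [CoxeterMatrix.toCoxeterSystem_simple] at this
    rw [hM'apply] at this
    rw [this, one_pow]
  set φ₁ : ↥(Subgroup.closure S₁) →* M'.Group := cs₁.lift ⟨_, pf₁⟩ with hφ₁
  have pf₂ : CoxeterMatrix.IsLiftable M₂
      (fun i : {x : ↥(Subgroup.closure S₂) | (x : W) ∈ S₂'} =>
        M'.simple ⟨((i : ↥(Subgroup.closure S₂)) : W), Set.mem_union_right _ i.2⟩) := by
    intro i j
    have hrel : (((i : ↥(Subgroup.closure S₂)) : W) * ((j : ↥(Subgroup.closure S₂)) : W))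
        ^ (M₂ i j) = 1 := by
      have h := cs₂.simple_mul_simple_pow i j
      rw [hcs₂, hcs₂] at h
      have h2 := congrArg Subtype.val h
      push_cast at h2
      exact h2
    obtain ⟨k, hk⟩ := orderOf_dvd_of_pow_eq_one hrel
    rw [hk, pow_mul]
    have := M'.toCoxeterSystem.simple_mul_simple_pow
      ⟨((i : ↥(Subgroup.closure S₂)) : W), Set.mem_union_right _ i.2⟩
      ⟨((j : ↥(Subgroup.closure S₂)) : W), Set.mem_union_right _ j.2⟩
    rw [CoxeterMatrix.toCoxeterSystem_simple, hM'apply] at this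
    rw [this, one_pow]
  set φ₂ : ↥(Subgroup.closure S₂) →* M'.Group := cs₂.lift ⟨_, pf₂⟩ with hφ₂
  have hφ₁simple : ∀ (x : W) (hx : x ∈ Subgroup.closure S₁) (hx' : x ∈ S₁'),
      φ₁ ⟨x, hx⟩ = M'.simple ⟨x, Set.mem_union_left _ hx'⟩ := by
    intro x hx hx'
    have h := cs₁.lift_apply_simple pf₁ ⟨⟨x, hx⟩, hx'⟩
    rw [hcs₁] at h
    exact h
  have hφ₂simple : ∀ (x : W) (hx : x ∈ Subgroup.closure S₂) (hx' : x ∈ S₂'),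
      φ₂ ⟨x, hx⟩ = M'.simple ⟨x, Set.mem_union_right _ hx'⟩ := by
    intro x hx hx'
    have h := cs₂.lift_apply_simple pf₂ ⟨⟨x, hx⟩, hx'⟩
    rw [hcs₂] at h
    exact h
  have hle₀₁ : Subgroup.closure S₀' ≤ Subgroup.closure S₁ := by
    rw [hW₀]
    exact Subgroup.closure_mono (by rw [← hinter]; exact Set.inter_subset_left)
  have hle₀₂ : Subgroup.closure S₀' ≤ Subgroup.closure S₂ := by
    rw [hW₀]
    exact Subgroup.closure_mono (by rw [← hinter]; exact Set.inter_subset_right)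
  -- agreement of φ₁ and φ₂ on the closure of S₀'
  have hagree : ∀ (x : W), x ∈ Subgroup.closure S₀' →
      ∀ (p1 : x ∈ Subgroup.closure S₁) (p2 : x ∈ Subgroup.closure S₂),
      φ₁ ⟨x, p1⟩ = φ₂ ⟨x, p2⟩ := by
    intro x hx
    induction hx using Subgroup.closure_induction with
    | mem y hy =>
      intro p1 p2
      rw [hφ₁simple y p1 (h₀₁ hy), hφ₂simple y p2 (h₀₂ hy)]
    | one =>
      intro p1 p2
      show φ₁ 1 = φ₂ 1
      rw [map_one, map_one]
    | mul x y hx hy ihx ihy =>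
      intro p1 p2
      show φ₁ (⟨x, hle₀₁ hx⟩ * ⟨y, hle₀₁ hy⟩) = φ₂ (⟨x, hle₀₂ hx⟩ * ⟨y, hle₀₂ hy⟩)
      rw [map_mul, map_mul, ihx, ihy]
    | inv x hx ihx =>
      intro p1 p2
      show φ₁ (⟨x, hle₀₁ hx⟩)⁻¹ = φ₂ (⟨x, hle₀₂ hx⟩)⁻¹
      rw [map_inv, map_inv, ihx]
  -- the generator map for g
  have hmem₂ : ∀ i : ↥S, (i : W) ∉ S₁ → (i : W) ∈ S₂ := by
    intro i h
    exact ((Set.ext_iff.mp hcover (i : W)).mpr i.2).resolve_left h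
  set G : ↥S → M'.Group := fun i =>
    if h : (i : W) ∈ S₁ then φ₁ ⟨i, Subgroup.subset_closure h⟩
    else φ₂ ⟨i, Subgroup.subset_closure (hmem₂ i h)⟩ with hG
  have hG₁ : ∀ (i : ↥S) (hi : (i : W) ∈ S₁),
      G i = φ₁ ⟨i, Subgroup.subset_closure hi⟩ := by
    intro i hi
    simp only [hG, dif_pos hi]
  have hG₂ : ∀ (i : ↥S) (hi : (i : W) ∈ S₂),
      G i = φ₂ ⟨i, Subgroup.subset_closure hi⟩ := by
    intro i hi
    by_cases h : (i : W) ∈ S₁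
    · have h0 : (i : W) ∈ Subgroup.closure S₀' := by
        rw [hW₀]
        exact Subgroup.subset_closure (hinter ▸ ⟨h, hi⟩)
      simp only [hG, dif_pos h]
      exact hagree _ h0 _ _
    · simp only [hG, dif_neg h]
  -- the relation in W for the original system
  have hrelW : ∀ i j : ↥S, ((i : W) * (j : W)) ^ (M i j) = 1 := by
    intro i j
    have h := cs.simple_mul_simple_pow i j
    rwa [hcs, hcs] at h
  -- liftability for g
  have hKcase : ∀ (i j : ↥S) (K : Subgroup W) (φ : ↥K →* M'.Group)
      (hi : (i : W) ∈ K) (hj : (j : W) ∈ K),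
      G i = φ ⟨i, hi⟩ → G j = φ ⟨j, hj⟩ → (G i * G j) ^ (M i j) = 1 := by
    intro i j K φ hi hj e1 e2
    have hsub : ((⟨(i : W), hi⟩ : K) * ⟨(j : W), hj⟩) ^ (M i j) = 1 := by
      apply Subtype.coe_injective
      push_cast
      exact hrelW i j
    rw [e1, e2, ← map_mul, ← map_pow, hsub, map_one]
  have pfG : CoxeterMatrix.IsLiftable M G := by
    intro i j
    by_cases hi1 : (i : W) ∈ S₁
    · by_cases hj1 : (j : W) ∈ S₁
      · exact hKcase i j _ φ₁ (Subgroup.subset_closure hi1) (Subgroup.subset_closure hj1)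
          (hG₁ i hi1) (hG₁ j hj1)
      · have hj2 : (j : W) ∈ S₂ := hmem₂ j hj1
        by_cases hi2 : (i : W) ∈ S₂
        · exact hKcase i j _ φ₂ (Subgroup.subset_closure hi2) (Subgroup.subset_closure hj2)
            (hG₂ i hi2) (hG₂ j hj2)
        · have hi0 : (i : W) ∉ S₀ := fun h => hi2 (hinter ▸ h).2
          have hj0 : (j : W) ∉ S₀ := fun h => hj1 (hinter ▸ h).1
          have ho := hinf _ ⟨hi1, hi0⟩ _ ⟨hj2, hj0⟩
          have hdvd := orderOf_dvd_of_pow_eq_one (hrelW i j)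
          rw [ho] at hdvd
          rw [zero_dvd_iff.mp hdvd, pow_zero]
    · have hi2 : (i : W) ∈ S₂ := hmem₂ i hi1
      by_cases hj2 : (j : W) ∈ S₂
      · exact hKcase i j _ φ₂ (Subgroup.subset_closure hi2) (Subgroup.subset_closure hj2)
          (hG₂ i hi2) (hG₂ j hj2)
      · have hj1 : (j : W) ∈ S₁ :=
          ((Set.ext_iff.mp hcover (j : W)).mpr j.2).resolve_right hj2
        have hi0 : (i : W) ∉ S₀ := fun h => hi1 (hinter ▸ h).1
        have hj0 : (j : W) ∉ S₀ := fun h => hj2 (hinter ▸ h).2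
        have ho := hinf _ ⟨hj1, hj0⟩ _ ⟨hi2, hi0⟩
        have ho' : orderOf ((i : W) * (j : W)) = 0 := by
          rw [orderOf_mul_comm']; exact ho
        have hdvd := orderOf_dvd_of_pow_eq_one (hrelW i j)
        rw [ho'] at hdvd
        rw [zero_dvd_iff.mp hdvd, pow_zero]
  set g : W →* M'.Group := cs.lift ⟨G, pfG⟩ with hg
  have hgsimple : ∀ i : ↥S, g (i : W) = G i := by
    intro i
    have h := cs.lift_apply_simple pfG i
    rwa [hcs] at h
  -- g agrees with φ₁ on the closure of S₁
  have hg₁ : ∀ (x : W) (hx : x ∈ Subgroup.closure S₁), g x = φ₁ ⟨x, hx⟩ := by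
    intro x hx
    induction hx using Subgroup.closure_induction with
    | mem y hy =>
      have hyS : y ∈ S := by rw [← hcover]; exact Or.inl hy
      exact (hgsimple ⟨y, hyS⟩).trans (hG₁ ⟨y, hyS⟩ hy)
    | one =>
      show g 1 = φ₁ 1
      rw [map_one, map_one]
    | mul x y hx hy ihx ihy =>
      show g (x * y) = φ₁ (⟨x, hx⟩ * ⟨y, hy⟩)
      rw [map_mul, map_mul, ihx, ihy]
    | inv x hx ihx =>
      show g x⁻¹ = φ₁ (⟨x, hx⟩)⁻¹
      rw [map_inv, map_inv, ihx]
  have hg₂ : ∀ (x : W) (hx : x ∈ Subgroup.closure S₂), g x = φ₂ ⟨x, hx⟩ := by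
    intro x hx
    induction hx using Subgroup.closure_induction with
    | mem y hy =>
      have hyS : y ∈ S := by rw [← hcover]; exact Or.inr hy
      exact (hgsimple ⟨y, hyS⟩).trans (hG₂ ⟨y, hyS⟩ hy)
    | one =>
      show g 1 = φ₂ 1
      rw [map_one, map_one]
    | mul x y hx hy ihx ihy =>
      show g (x * y) = φ₂ (⟨x, hx⟩ * ⟨y, hy⟩)
      rw [map_mul, map_mul, ihx, ihy]
    | inv x hx ihx =>
      show g x⁻¹ = φ₂ (⟨x, hx⟩)⁻¹
      rw [map_inv, map_inv, ihx]
  -- g ∘ f = id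
  have hgf : ∀ a : ↥(S₁' ∪ S₂'), g ((a : W)) = M'.simple a := by
    intro a
    rcases a.2 with ha | ha
    · rw [hg₁ _ (hsub₁ ha), hφ₁simple _ _ ha]
    · rw [hg₂ _ (hsub₂ ha), hφ₂simple _ _ ha]
  have hcomp : ∀ x, g (f x) = x := by
    have hcl : Subgroup.closure (Set.range M'.simple) = ⊤ := by
      have := M'.toCoxeterSystem.subgroup_closure_range_simple
      rwa [CoxeterMatrix.toCoxeterSystem_simple] at this
    have heq : g.comp f = MonoidHom.id M'.Group := by
      apply MonoidHom.eq_of_eqOn_dense hcl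
      rintro x ⟨a, rfl⟩
      show g (f (M'.simple a)) = M'.simple a
      rw [hfsimple, hgf]
    intro x
    exact DFunLike.congr_fun heq x
  -- f is surjective
  have hclosU : Subgroup.closure (S₁' ∪ S₂') = ⊤ := by
    rw [Subgroup.closure_union, hW₁, hW₂, ← Subgroup.closure_union, hcover, hStop]
  have hsurj : Function.Surjective f := by
    rw [← MonoidHom.range_eq_top]
    rw [eq_top_iff, ← hclosU, Subgroup.closure_le]
    intro w hw
    exact ⟨M'.simple ⟨w, hw⟩, hfsimple _⟩
  have hinj : Function.Injective f := fun x y hxy => by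
    rw [← hcomp x, hxy, hcomp]
  refine ⟨M', M'.toCoxeterSystem.map (MulEquiv.ofBijective f ⟨hinj, hsurj⟩), fun a => ?_⟩
  rw [CoxeterSystem.map_simple, CoxeterMatrix.toCoxeterSystem_simple]
  exact hfsimple a
end

section
/- Let (W,S) be a chordal Coxeter system, let A = {a,b,c} be a maximal irreducible simplex of (W,S), and let d ∈ S − (A ∪ A^⊥) be such that {a,b,d} is a simplex of (W,S). Then {a,b} ∪ A^⊥ is a (c,d)-separator of S. -/
namespace CoxeterMatrix

variable {B : Type*}

/-- The underlying graph of the presentation diagram of a Coxeter matrix: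
vertices are the indices, and `s, t` are adjacent when `m(s,t) < ∞`
(`0` encodes `∞`). -/
def pDiagram (M : CoxeterMatrix B) : SimpleGraph B where
  Adj s t := s ≠ t ∧ M s t ≠ 0
  symm := ⟨by intro s t h; exact ⟨h.1.symm, by rw [M.symmetric]; exact h.2⟩⟩
  loopless := ⟨by intro s h; exact h.1 rfl⟩

/-- The underlying graph of the Coxeter diagram induced on a subset `A`:
`s, t ∈ A` are adjacent when `m(s,t) > 2` (including `m(s,t) = ∞`, encoded by `0`). -/
def cDiagramOn (M : CoxeterMatrix B) (A : Set B) : SimpleGraph A where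
  Adj s t := (s : B) ≠ (t : B) ∧ M s t ≠ 2
  symm := ⟨by intro s t h; exact ⟨h.1.symm, by rw [M.symmetric]; exact h.2⟩⟩
  loopless := ⟨by intro s h; exact h.1 rfl⟩

/-- A *simplex*: a subset whose elements pairwise satisfy `m(s,t) < ∞`. -/
def IsSimplex (M : CoxeterMatrix B) (A : Set B) : Prop :=
  A.Pairwise fun s t => M s t ≠ 0

/-- A subset is *irreducible* if its Coxeter diagram is connected. -/
def IsIrreducible (M : CoxeterMatrix B) (A : Set B) : Prop :=
  (M.cDiagramOn A).Connected

def IsIrredSimplex (M : CoxeterMatrix B) (A : Set B) : Prop :=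
  M.IsSimplex A ∧ M.IsIrreducible A

/-- A maximal irreducible simplex. -/
def IsMaxIrredSimplex (M : CoxeterMatrix B) (A : Set B) : Prop :=
  M.IsIrredSimplex A ∧ ∀ A' : Set B, A ⊂ A' → ¬ M.IsIrredSimplex A'

/-- `A^⊥ = {s : m(s,a) = 2 for all a ∈ A}`. -/
def perp (M : CoxeterMatrix B) (A : Set B) : Set B :=
  {s | ∀ a ∈ A, M s a = 2}

/-- Type `G₃` (= `H₃`): labels `3, 5` on a path, other label `2`. -/
def IsTypeG3 (M : CoxeterMatrix B) (A : Set B) : Prop :=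
  ∃ a b c : B, A = {a, b, c} ∧ M a b = 3 ∧ M b c = 5 ∧ M a c = 2

/-- Type `G₄` (= `H₄`): labels `3, 3, 5` on a path, other labels `2`. -/
def IsTypeG4 (M : CoxeterMatrix B) (A : Set B) : Prop :=
  ∃ a b c d : B, A = {a, b, c, d} ∧ M a b = 3 ∧ M b c = 3 ∧ M c d = 5 ∧
    M a c = 2 ∧ M a d = 2 ∧ M b d = 2

/-- A set of *bad edges*: a symmetric set of pairs `{a,b}` with `m(a,b) ≥ 5` such that
every irreducible simplex properly containing `{a,b}` is of type `G₃` or `G₄`. -/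
def IsBadEdgeSet (M : CoxeterMatrix B) (E : B → B → Prop) : Prop :=
  (∀ a b, E a b → E b a) ∧
  (∀ a b, E a b → M a b = 0 ∨ 5 ≤ M a b) ∧
  (∀ a b, E a b → ∀ A : Set B, M.IsIrredSimplex A → ({a, b} : Set B) ⊂ A →
    M.IsTypeG3 A ∨ M.IsTypeG4 A)

/-- A *bad* irreducible simplex: an irreducible simplex containing a bad edge. -/
def IsBadSimplex (M : CoxeterMatrix B) (E : B → B → Prop) (A : Set B) : Prop :=
  M.IsIrredSimplex A ∧ ∃ a ∈ A, ∃ b ∈ A, E a b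

/-- A *bad separator*: a subset `Bs` containing a pair of eyes `a, b` with `m(a,b) = 2`,
with a bad focus `c ∉ Bs` making `{a,b,c}` a bad maximal irreducible simplex,
`Bs ⊆ {a,b} ∪ {a,b,c}^⊥`, and with a good focus `f ∉ Bs` making `Bs` a minimal
`(c,f)`-separator of the presentation diagram. -/
def IsBadSeparator (M : CoxeterMatrix B) (E : B → B → Prop) (Bs : Set B) : Prop :=
  ∃ a b c : B, a ∈ Bs ∧ b ∈ Bs ∧ M a b = 2 ∧ c ∉ Bs ∧
    M.IsMaxIrredSimplex {a, b, c} ∧ M.IsBadSimplex E {a, b, c} ∧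
    Bs ⊆ {a, b} ∪ M.perp {a, b, c} ∧
    ∃ f, f ∉ Bs ∧ M.pDiagram.IsMinSeparator c f Bs

/-- `{x, y}` is a bad 5-edge: `m(x,y) = 5` and every irreducible simplex
properly containing `{x,y}` is of type `G₃` or `G₄`. -/
def IsBad5Edge (M : CoxeterMatrix B) (x y : B) : Prop :=
  x ≠ y ∧ M x y = 5 ∧ ∀ A : Set B, M.IsIrredSimplex A → ({x, y} : Set B) ⊂ A →
    M.IsTypeG3 A ∨ M.IsTypeG4 A

/-- The bad-edge set consisting of the single unordered pair `{x, y}`. -/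
def singleEdge (x y : B) : B → B → Prop :=
  fun u v => (u = x ∧ v = y) ∨ (u = y ∧ v = x)

end CoxeterMatrix

/-!
Suppose a path in `Γ` avoiding `{a, b} ∪ A^⊥` joined `c` to `d`; take a shortest one, which is
chordless, and let `x` be its vertex after `c`. Both `a` and `b` are adjacent to `c` and `d`, and
in a chordal graph a vertex adjacent to the two ends of a chordless path is adjacent to every
vertex of it (the cycle closed up through that vertex has a chord, which must leave that vertex,
so induct on the length). Hence `x` is adjacent to `a`, `b` and `c`, so `A ∪ {x}` is a simplex;
maximality of the irreducible simplex `A` then forces `x ∈ A^⊥`, a contradiction.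
-/

namespace SimpleGraph

variable {V : Type*} {G : SimpleGraph V} {u v w x α : V}

namespace Walk

lemma mem_edges_of_length_eq_one {p : G.Walk u v} (hp : p.length = 1) : s(u, v) ∈ p.edges := by
  cases p with
  | nil => simp at hp
  | cons _ q => cases q with
    | nil => simp
    | cons _ _ => simp at hp

/-- A subwalk joining two adjacent vertices is again a geodesic, hence a single edge. -/
theorem isChordless_of_length_eq_dist {p : G.Walk u v} (hp : p.length = G.dist u v) :
    p.IsChordless := by
  classical
  have mem_edges {x y : V} (r : G.Walk x y) (hr : r.IsSubwalk p) (hxy : G.Adj x y) :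
      s(x, y) ∈ p.edges :=
    hr.edges_subset <| mem_edges_of_length_eq_one <| by
      rw [length_eq_dist_of_subwalk hp hr, dist_eq_one_iff_adj.2 hxy]
  rw [isChordless_iff_forall_mem_edges]
  intro x y hx hy hxy
  rw [← take_spec p hx, mem_support_append_iff] at hy
  rcases hy with hy | hy
  · rw [Sym2.eq_swap]
    exact mem_edges _ (((p.takeUntil x hx).isSubwalk_dropUntil hy).trans
      (p.isSubwalk_takeUntil hx)) hxy.symm
  · exact mem_edges _ (((p.dropUntil x hx).isSubwalk_takeUntil hy).trans
      (p.isSubwalk_dropUntil hx)) hxy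

theorem IsChordless.map {V' : Type*} {G' : SimpleGraph V'} (f : G ↪g G') {p : G.Walk u v}
    (hp : p.IsChordless) : (p.map f.toHom).IsChordless := by
  rw [isChordless_iff_forall_mem_edges]
  intro x y hx hy hxy
  simp only [support_map, List.mem_map] at hx hy
  obtain ⟨x, hx, rfl⟩ := hx
  obtain ⟨y, hy, rfl⟩ := hy
  rw [edges_map, List.mem_map]
  exact ⟨s(x, y), hp.mem_edges hx hy (f.map_adj_iff.1 hxy), rfl⟩

lemma IsPath.eq_of_mem_support_of_append {p : G.Walk u v} {q : G.Walk v w}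
    (hpq : (p.append q).IsPath) (hp : x ∈ p.support) (hq : x ∈ q.support) : x = v := by
  by_contra hxv
  exact hpq.ne_of_mem_support_of_append hxv hp hq rfl

theorem IsChordless.of_append_left {p : G.Walk u v} {q : G.Walk v w} (hpq : (p.append q).IsPath)
    (h : (p.append q).IsChordless) : p.IsChordless := by
  rw [isChordless_iff_forall_mem_edges]
  intro x y hx hy hxy
  have := h.mem_edges (by simp [hx]) (by simp [hy]) hxy
  rw [edges_append, List.mem_append] at this
  refine this.resolve_right fun hq => hxy.ne ?_
  rw [hpq.eq_of_mem_support_of_append hx (q.fst_mem_support_of_mem_edges hq),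
    hpq.eq_of_mem_support_of_append hy (q.snd_mem_support_of_mem_edges hq)]

theorem IsChordless.of_append_right {p : G.Walk u v} {q : G.Walk v w} (hpq : (p.append q).IsPath)
    (h : (p.append q).IsChordless) : q.IsChordless := by
  rw [isChordless_iff_forall_mem_edges]
  intro x y hx hy hxy
  have := h.mem_edges (by simp [hx]) (by simp [hy]) hxy
  rw [edges_append, List.mem_append] at this
  refine this.resolve_left fun hp => hxy.ne ?_
  rw [hpq.eq_of_mem_support_of_append (p.fst_mem_support_of_mem_edges hp) hx,
    hpq.eq_of_mem_support_of_append (p.snd_mem_support_of_mem_edges hp) hy]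

end Walk

open Walk

theorem Reachable.exists_isPath_isChordless_of_induce {s : Set V} {u v : s}
    (h : (G.induce s).Reachable u v) :
    ∃ p : G.Walk u v, p.IsPath ∧ p.IsChordless ∧ ∀ x ∈ p.support, x ∈ s := by
  obtain ⟨q, hq⟩ := h.exists_walk_length_eq_dist
  have hs : ∀ x ∈ (q.map (Embedding.induce s).toHom).support, x ∈ s := by
    simp only [Walk.support_map, List.mem_map]
    rintro _ ⟨y, -, rfl⟩
    exact y.2
  exact ⟨_, (q.isPath_of_length_eq_dist hq).map Subtype.val_injective,
    (isChordless_of_length_eq_dist hq).map _, hs⟩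

/-- The chord of the cycle `α u ⋯ v α` that chordality provides must leave `α`, since `p` has no
chords of its own. -/
lemma IsChordal.exists_adj_of_isPath (hG : G.IsChordal) {p : G.Walk u v} (hp : p.IsPath)
    (hpc : p.IsChordless) (hα : α ∉ p.support) (hu : G.Adj α u) (hv : G.Adj α v)
    (hlen : 2 ≤ p.length) : ∃ y ∈ p.support, y ≠ u ∧ y ≠ v ∧ G.Adj α y := by
  have huv : u ≠ v := fun h => by
    subst h
    have := (isPath_iff_nil.1 hp).length_eq_zero
    omega
  set C : G.Walk α α := cons hu (p.concat hv.symm)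
  have hC : C.IsCycle := by
    refine (cons_isCycle_iff _ hu).2 ⟨hp.concat hα hv.symm, ?_⟩
    rw [edges_concat, List.concat_eq_append, List.mem_append, List.mem_singleton, Sym2.eq_iff]
    exact not_or.2 ⟨fun h => hα (p.fst_mem_support_of_mem_edges h),
      fun h => h.elim (fun h => hu.ne h.2.symm) (fun h => huv h.2)⟩
  obtain ⟨x, y, hx, hy, hxy, hne⟩ := hG C hC (by simp [C]; omega)
  simp only [C, support_cons, support_concat, List.mem_cons, List.mem_append] at hx hy
  simp only [C, edges_cons, edges_concat, List.concat_eq_append, List.mem_cons, List.mem_append,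
    List.not_mem_nil, or_false, not_or] at hne
  have of_chord_at_α {y : V} (hy : y ∈ p.support) (hαy : G.Adj α y) (hyu : s(α, y) ≠ s(α, u))
      (hyv : s(α, y) ≠ s(v, α)) : ∃ y ∈ p.support, y ≠ u ∧ y ≠ v ∧ G.Adj α y :=
    ⟨y, hy, fun h => hyu (h ▸ rfl), fun h => hyv (h ▸ Sym2.eq_swap), hαy⟩
  replace hx : x = α ∨ x ∈ p.support := by tauto
  replace hy : y = α ∨ y ∈ p.support := by tauto
  rcases hx with rfl | hx <;> rcases hy with rfl | hy
  · exact absurd rfl hxy.ne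
  · exact of_chord_at_α hy hxy hne.1 hne.2.2
  · rw [Sym2.eq_swap] at hne
    exact of_chord_at_α hx hxy.symm hne.1 hne.2.2
  · exact absurd (hpc.mem_edges hx hy hxy) hne.2.1

theorem IsChordal.adj_of_mem_support (hG : G.IsChordal) {p : G.Walk u v} (hp : p.IsPath)
    (hpc : p.IsChordless) (hα : α ∉ p.support) (hu : G.Adj α u) (hv : G.Adj α v) {w : V}
    (hw : w ∈ p.support) : G.Adj α w := by
  classical
  induction hn : p.length using Nat.strong_induction_on generalizing u v p with
  | _ n ih =>
  by_cases hwu : w = u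
  · exact hwu ▸ hu
  by_cases hwv : w = v
  · exact hwv ▸ hv
  have hlen : 2 ≤ p.length := by
    have := length_takeUntil_lt_length hw hwv
    have : (p.takeUntil w hw).length ≠ 0 := fun h => hwu (eq_of_length_eq_zero h).symm
    omega
  obtain ⟨y, hy, hyu, hyv, hαy⟩ := hG.exists_adj_of_isPath hp hpc hα hu hv hlen
  have hsplit := take_spec p hy
  rw [← hsplit, mem_support_append_iff] at hw
  rw [← hsplit] at hp hpc
  rcases hw with hw | hw
  · exact ih _ (hn ▸ length_takeUntil_lt_length hy hyv) hp.of_append_left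
      (hpc.of_append_left hp) (fun h => hα (support_takeUntil_subset_support p hy h)) hu hαy hw rfl
  · exact ih _ (hn ▸ length_dropUntil_lt_length hy hyu) hp.of_append_right
      (hpc.of_append_right hp) (fun h => hα (support_dropUntil_subset_support p hy h)) hαy hv hw rfl

end SimpleGraph

namespace CoxeterMatrix

variable {B : Type*} (M : CoxeterMatrix B) {A A' : Set B} {x : B}

def cDiagramOnHomOfLE (h : A ⊆ A') : M.cDiagramOn A →g M.cDiagramOn A' where
  toFun y := ⟨y, h y.2⟩
  map_rel' hyz := hyz

variable {M}

theorem IsSimplex.insert (hA : M.IsSimplex A) (hx : ∀ t ∈ A, M x t ≠ 0) :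
    M.IsSimplex (insert x A) :=
  Set.pairwise_insert.2 ⟨hA, fun t ht _ => ⟨hx t ht, M.symmetric x t ▸ hx t ht⟩⟩

theorem IsIrreducible.insert_of_ne_two (hA : M.IsIrreducible A) (hxA : x ∉ A) {t : B} (ht : t ∈ A)
    (hxt : M x t ≠ 2) : M.IsIrreducible (insert x A) := by
  let t' : ↥(insert x A) := ⟨t, Set.mem_insert_of_mem x ht⟩
  have reach_t (y : ↥(insert x A)) : (M.cDiagramOn (insert x A)).Reachable y t' := by
    obtain ⟨y, rfl | hy⟩ := y
    · exact SimpleGraph.Adj.reachable ⟨fun h : y = t => hxA (h ▸ ht), hxt⟩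
    · exact (hA.preconnected ⟨y, hy⟩ ⟨t, ht⟩).map (M.cDiagramOnHomOfLE (Set.subset_insert x A))
  exact (SimpleGraph.connected_iff _).2 ⟨fun y z => (reach_t y).trans (reach_t z).symm, ⟨t'⟩⟩

theorem IsMaxIrredSimplex.mem_perp (hA : M.IsMaxIrredSimplex A) (hxA : x ∉ A)
    (hx : ∀ t ∈ A, M x t ≠ 0) : x ∈ M.perp A := by
  by_contra hperp
  obtain ⟨t, ht, hxt⟩ : ∃ t ∈ A, M x t ≠ 2 := by simpa [perp] using hperp
  exact hA.2 _ (Set.ssubset_insert hxA) ⟨hA.1.1.insert hx, hA.1.2.insert_of_ne_two hxA ht hxt⟩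

end CoxeterMatrix

theorem perp_isSeparator_general {B : Type*} (M : CoxeterMatrix B)
    (hch : M.pDiagram.IsChordal) (a b c : B)
    (hac : a ≠ c) (hbc : b ≠ c)
    (hA : M.IsMaxIrredSimplex {a, b, c}) (d : B)
    (hd : d ∉ ({a, b, c} : Set B) ∪ M.perp {a, b, c})
    (habd : M.IsSimplex {a, b, d}) :
    M.pDiagram.IsSeparator c d ({a, b} ∪ M.perp {a, b, c}) := by
  simp only [Set.mem_union, Set.mem_insert_iff, Set.mem_singleton_iff, not_or] at hd
  obtain ⟨⟨hda, hdb, hdc⟩, hd_perp⟩ := hd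
  have hc : c ∉ ({a, b} ∪ M.perp {a, b, c} : Set B) := by
    simp [CoxeterMatrix.perp, hac.symm, hbc.symm]
  refine ⟨hc, by simp [hda, hdb, hd_perp], fun hreach => ?_⟩
  obtain ⟨p, hp, hpc, hp_avoid⟩ := hreach.exists_isPath_isChordless_of_induce
  have hnil : ¬p.Nil := SimpleGraph.Walk.not_nil_of_ne (Ne.symm hdc)
  have hx : p.snd ∈ p.support := List.mem_of_mem_tail (p.snd_mem_tail_support hnil)
  have adj_snd {s : B} (hs : s ∈ ({a, b} : Set B)) (hsc : M.pDiagram.Adj s c)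
      (hsd : M.pDiagram.Adj s d) : M.pDiagram.Adj s p.snd :=
    hch.adj_of_mem_support hp hpc (fun h => hp_avoid s h (.inl hs)) hsc hsd hx
  have hx_adj : ∀ t ∈ ({a, b, c} : Set B), M.pDiagram.Adj t p.snd := by
    rintro t (rfl | rfl | rfl)
    · exact adj_snd (by simp) ⟨hac, hA.1.1 (by simp) (by simp) hac⟩
        ⟨Ne.symm hda, habd (by simp) (by simp) (Ne.symm hda)⟩
    · exact adj_snd (by simp) ⟨hbc, hA.1.1 (by simp) (by simp) hbc⟩
        ⟨Ne.symm hdb, habd (by simp) (by simp) (Ne.symm hdb)⟩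
    · exact p.adj_snd hnil
  have hx_out := hp_avoid _ hx
  refine hx_out (.inr (hA.mem_perp ?_ fun t ht => M.symmetric t _ ▸ (hx_adj t ht).2))
  rintro (h | h | h)
  · exact hx_out (.inl (.inl h))
  · exact hx_out (.inl (.inr h))
  · exact (hx_adj c (by simp)).ne h.symm

/-- **Lemma 4.1.** Let `(W,S)` be a chordal Coxeter system, let `A = {a,b,c}` be a
maximal irreducible simplex, and let `d ∈ S − (A ∪ A^⊥)` be such that `{a,b,d}` is a
simplex. Then `{a,b} ∪ A^⊥` is a `(c,d)`-separator of the presentation diagram. -/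
theorem perp_isSeparator {B : Type*} (M : CoxeterMatrix B)
    (hch : M.pDiagram.IsChordal) (a b c : B)
    (hab : a ≠ b) (hac : a ≠ c) (hbc : b ≠ c)
    (hA : M.IsMaxIrredSimplex {a, b, c}) (d : B)
    (hd : d ∉ ({a, b, c} : Set B) ∪ M.perp {a, b, c})
    (habd : M.IsSimplex {a, b, d}) :
    M.pDiagram.IsSeparator c d ({a, b} ∪ M.perp {a, b, c}) :=
  perp_isSeparator_general M hch a b c hac hbc hA d hd habd
end

section
/- Let (W,S) be a Coxeter system with exactly one bad 5-edge. Let B be a bad separator of S with head A = {a,b,c}, eyes {a,b}, and good focus f; let D = {a,b} ∪ A^⊥. Then the connected component of Γ(W,S) − B containing f equals the connected component of Γ(W,S) − D containing f. -/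
namespace SimpleGraph

variable {V : Type*} {G : SimpleGraph V}

theorem InSepComp.anti {S T : Set V} {u g : V} (hST : S ⊆ T) (h : G.InSepComp T u g) :
    G.InSepComp S u g := by
  obtain ⟨hu, hg, r⟩ := h
  have hTS : Tᶜ ⊆ Sᶜ := Set.compl_subset_compl.2 hST
  exact ⟨hTS hu, hTS hg, r.map (G.induceHomOfLE hTS).toHom⟩

theorem IsSeparator.not_adj_of_inSepComp {S : Set V} {c f g : V} (hS : G.IsSeparator c f S)
    (hg : G.InSepComp S f g) : ¬ G.Adj c g := by
  obtain ⟨hc, hf, hnr⟩ := hS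
  obtain ⟨_, hg, r⟩ := hg
  intro hcg
  exact hnr ((induce_adj.2 hcg : (G.induce Sᶜ).Adj ⟨c, hc⟩ ⟨g, hg⟩).reachable.trans r.symm)

theorem InSepComp.of_forall_notMem {S T : Set V} {f g : V}
    (hT : ∀ v, G.InSepComp S f v → v ∉ T) (h : G.InSepComp S f g) : G.InSepComp T f g := by
  classical
  obtain ⟨hf, hg, ⟨w⟩⟩ := h
  let p : G.Walk f g := w.map (Embedding.induce Sᶜ).toHom
  have hp : ∀ v ∈ p.support, v ∈ Tᶜ := by
    intro v hv
    obtain ⟨z, hz, rfl⟩ := List.mem_map.1 ((Walk.support_map _ w) ▸ hv)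
    exact hT z ⟨hf, z.2, (w.takeUntil z hz).reachable⟩
  exact ⟨hp f p.start_mem_support, hp g p.end_mem_support, ⟨p.induce Tᶜ hp⟩⟩

end SimpleGraph

namespace CoxeterMatrix

variable {B : Type*}

theorem pDiagram_adj_of_mem_perp (M : CoxeterMatrix B) {A : Set B} {c v : B} (hc : c ∈ A)
    (hv : v ∈ M.perp A) : M.pDiagram.Adj c v := by
  have hvc : M v c = 2 := hv c hc
  refine ⟨fun hcv => ?_, by rw [M.symmetric, hvc]; omega⟩
  rw [hcv, M.diagonal] at hvc
  omega

end CoxeterMatrix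

theorem component_badSep_eq_component_grossSep_general {B : Type*} (M : CoxeterMatrix B)
    (a b c : B)
    (Bs : Set B) (ha : a ∈ Bs) (hb : b ∈ Bs)
    (hsub : Bs ⊆ ({a, b} : Set B) ∪ M.perp {a, b, c})
    (f : B) (hmin : M.pDiagram.IsMinSeparator c f Bs) :
    {g | M.pDiagram.InSepComp Bs f g} =
      {g | M.pDiagram.InSepComp (({a, b} : Set B) ∪ M.perp {a, b, c}) f g} := by
  ext g
  refine ⟨fun hg => hg.of_forall_notMem fun v hv hvD => ?_, fun hg => hg.anti hsub⟩
  -- A vertex of `D − Bs` lies in `A^⊥`, so it is adjacent to `c` and cannot share `f`'s component.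
  have hvperp : v ∈ M.perp {a, b, c} := by
    obtain ⟨_, hvBs, _⟩ := hv
    rcases hvD with (rfl | rfl) | hvperp
    exacts [absurd ha hvBs, absurd hb hvBs, hvperp]
  exact hmin.1.not_adj_of_inSepComp hv (M.pDiagram_adj_of_mem_perp (by simp) hvperp)

/-- **Lemma 5.7.** Let `(W,S)` be a Coxeter system with exactly one bad 5-edge. Let
`Bs` be a bad separator with head `A = {a,b,c}`, eyes `{a,b}`, and good focus `f`,
and let `D = {a,b} ∪ A^⊥`. Then the connected component of `Γ(W,S) − Bs` containing
`f` equals the connected component of `Γ(W,S) − D` containing `f`. -/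
theorem component_badSep_eq_component_grossSep {B : Type*} (M : CoxeterMatrix B)
    (x y : B) (hxy : M.IsBad5Edge x y) (a b c : B) (hab : M a b = 2)
    (hA : M.IsMaxIrredSimplex {a, b, c})
    (hbad : M.IsBadSimplex (CoxeterMatrix.singleEdge x y) {a, b, c})
    (Bs : Set B) (ha : a ∈ Bs) (hb : b ∈ Bs) (hc : c ∉ Bs)
    (hsub : Bs ⊆ ({a, b} : Set B) ∪ M.perp {a, b, c})
    (f : B) (hf : f ∉ Bs) (hmin : M.pDiagram.IsMinSeparator c f Bs) :
    {g | M.pDiagram.InSepComp Bs f g} =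
      {g | M.pDiagram.InSepComp (({a, b} : Set B) ∪ M.perp {a, b, c}) f g} :=
  component_badSep_eq_component_grossSep_general M a b c Bs ha hb hsub f hmin
end

section
/- Let (W,S) be a Coxeter system with exactly one bad 5-edge. If B is a bad separator of S with head A = {a,b,c}, eyes {a,b}, and good focus f, then D = {a,b} ∪ A^⊥ is a gross separator of S with head A and good focus f. -/
/-!
Every vertex `e` of a minimal `(c,f)`-separator `Bs` has a neighbour in the component `K` of `f`
in `Γ − Bs`. Each vertex of `D = {a,b} ∪ A^⊥` outside `Bs` is adjacent to `c` (its label with `c`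
is `2`), so it cannot lie in `K`; hence `K` misses `D`, and for an eye `e` the path
`c – e – K – f` avoids `D − {e}`. Since `Bs ⊆ D`, the set `D` itself still separates.
-/

namespace SimpleGraph

variable {V : Type*} {G : SimpleGraph V} {Bs D : Set V} {c f u v w e : V}

theorem inSepComp_iff_exists_walk :
    G.InSepComp Bs u v ↔ ∃ p : G.Walk u v, ∀ x ∈ p.support, x ∉ Bs := by
  constructor
  · rintro ⟨_, _, ⟨p⟩⟩
    refine ⟨p.map (Embedding.induce Bsᶜ).toHom, fun x hx => ?_⟩
    obtain ⟨y, -, rfl⟩ := List.mem_map.1 (Walk.support_map _ p ▸ hx)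
    exact y.2
  · rintro ⟨p, hp⟩
    exact ⟨_, _, ⟨p.induce Bsᶜ hp⟩⟩

theorem isSeparator_iff_s16 :
    G.IsSeparator c f Bs ↔ c ∉ Bs ∧ f ∉ Bs ∧ ¬ G.InSepComp Bs c f :=
  ⟨fun ⟨hc, hf, h⟩ => ⟨hc, hf, fun ⟨_, _, r⟩ => h r⟩,
    fun ⟨hc, hf, h⟩ => ⟨hc, hf, fun r => h ⟨hc, hf, r⟩⟩⟩

theorem InSepComp.refl (hu : u ∉ Bs) : G.InSepComp Bs u u :=
  ⟨hu, hu, .refl _⟩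

theorem InSepComp.of_adj (h : G.InSepComp Bs u v) (hwu : G.Adj w u) (hw : w ∉ Bs) :
    G.InSepComp Bs w v :=
  ⟨hw, h.2.1, (induce_adj.2 hwu).reachable.trans h.2.2⟩

theorem InSepComp.anti_s16 (h : G.InSepComp D u v) (hBD : Bs ⊆ D) : G.InSepComp Bs u v := by
  obtain ⟨p, hp⟩ := inSepComp_iff_exists_walk.1 h
  exact inSepComp_iff_exists_walk.2 ⟨p, fun x hx hxB => hp x hx (hBD hxB)⟩

theorem Walk.inSepComp_of_mem_support (p : G.Walk u v) (hp : ∀ x ∈ p.support, x ∉ Bs)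
    (hw : w ∈ p.support) : G.InSepComp Bs w v := by
  classical
  exact inSepComp_iff_exists_walk.2
    ⟨p.dropUntil w hw, fun x hx => hp x (p.support_dropUntil_subset_support hw hx)⟩

theorem IsSeparator.not_adj_s16 (h : G.IsSeparator c f Bs) : ¬ G.Adj c f := fun hcf =>
  have ⟨hc, hf, hsep⟩ := isSeparator_iff_s16.1 h
  hsep ((InSepComp.refl hf).of_adj hcf hc)

theorem IsSeparator.mono (h : G.IsSeparator c f Bs) (hBD : Bs ⊆ D) (hc : c ∉ D) (hf : f ∉ D) :
    G.IsSeparator c f D :=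
  isSeparator_iff_s16.2 ⟨hc, hf, fun hD => (isSeparator_iff_s16.1 h).2.2 (hD.anti_s16 hBD)⟩

theorem IsMinSeparator.exists_adj_inSepComp_s16 (hmin : G.IsMinSeparator c f Bs) (he : e ∈ Bs) :
    ∃ k, G.Adj e k ∧ G.InSepComp Bs k f := by
  obtain ⟨hc, hf, hcf⟩ := isSeparator_iff_s16.1 hmin.1
  obtain ⟨p, hp⟩ : ∃ p : G.Walk c f, ∀ x ∈ p.support, x ∉ Bs \ {e} := by
    rw [← inSepComp_iff_exists_walk]
    by_contra h
    exact hmin.2 _ (Set.sdiff_singleton_ssubset.2 he)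
      (isSeparator_iff_s16.2 ⟨fun h' => hc h'.1, fun h' => hf h'.1, h⟩)
  -- A walk from `f` to `c` avoiding `Bs − {e}` must leave the component of `f`, and only via `e`.
  obtain ⟨d, hd, hfst, hsnd⟩ :=
    p.reverse.exists_boundary_dart {x | G.InSepComp Bs x f} (InSepComp.refl hf) hcf
  have hsnd_mem : d.snd ∉ Bs \ {e} :=
    hp _ (by simpa using p.reverse.dart_snd_mem_support_of_mem_darts hd)
  obtain rfl : d.snd = e := by
    by_contra hne
    exact hsnd (hfst.of_adj d.adj.symm fun h => hsnd_mem ⟨h, hne⟩)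
  exact ⟨d.fst, d.adj.symm, hfst⟩

theorem IsMinSeparator.not_isSeparator_sdiff_singleton (hmin : G.IsMinSeparator c f Bs)
    (he : e ∈ Bs) (hcD : c ∉ D) (hce : G.Adj c e) (hadj : ∀ w ∈ D, w ∉ Bs → G.Adj c w) :
    ¬ G.IsSeparator c f (D \ {e}) := by
  obtain ⟨hc, -, hcf⟩ := isSeparator_iff_s16.1 hmin.1
  obtain ⟨k, hek, hk⟩ := hmin.exists_adj_inSepComp_s16 he
  obtain ⟨q, hq⟩ := inSepComp_iff_exists_walk.1 hk
  have hqD : ∀ x ∈ q.support, x ∉ D := fun x hx hxD =>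
    hcf ((q.inSepComp_of_mem_support hq hx).of_adj (hadj x hxD (hq x hx)) hc)
  refine fun hDsep => (isSeparator_iff_s16.1 hDsep).2.2
    (inSepComp_iff_exists_walk.2 ⟨.cons hce (.cons hek q), ?_⟩)
  simp only [Walk.support_cons, List.mem_cons]
  rintro x (rfl | rfl | hx) hxD
  · exact hcD hxD.1
  · exact hxD.2 rfl
  · exact hqD x hx hxD.1

end SimpleGraph

namespace CoxeterMatrix

variable {B : Type*} {M : CoxeterMatrix B} {A : Set B} {s t : B}

theorem ne_of_eq_two (h : M s t = 2) : s ≠ t := by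
  rintro rfl
  simp at h

theorem pDiagram_adj_of_eq_two (M : CoxeterMatrix B) (h : M s t = 2) : M.pDiagram.Adj s t :=
  ⟨ne_of_eq_two h, by omega⟩

theorem IsSimplex.pDiagram_adj (hA : M.IsSimplex A) (hs : s ∈ A) (ht : t ∈ A) (hst : s ≠ t) :
    M.pDiagram.Adj s t :=
  ⟨hst, hA hs ht hst⟩

theorem notMem_perp_of_mem (M : CoxeterMatrix B) (hs : s ∈ A) : s ∉ M.perp A := fun h =>
  ne_of_eq_two (h s hs) rfl

end CoxeterMatrix

theorem grossSeparator_of_badSeparator_general {B : Type*} (M : CoxeterMatrix B) (a b c : B)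
    (hA : M.IsMaxIrredSimplex {a, b, c})
    (Bs : Set B) (ha : a ∈ Bs) (hb : b ∈ Bs) (hc : c ∉ Bs)
    (hsub : Bs ⊆ ({a, b} : Set B) ∪ M.perp {a, b, c})
    (f : B) (hf : f ∉ Bs) (hmin : M.pDiagram.IsMinSeparator c f Bs) :
    c ∉ ({a, b} : Set B) ∪ M.perp {a, b, c} ∧
    f ∉ ({a, b} : Set B) ∪ M.perp {a, b, c} ∧
    M.pDiagram.IsSeparator c f (({a, b} : Set B) ∪ M.perp {a, b, c}) ∧
    ¬ M.pDiagram.IsSeparator c f ((({a, b} : Set B) ∪ M.perp {a, b, c}) \ {a}) ∧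
    ¬ M.pDiagram.IsSeparator c f ((({a, b} : Set B) ∪ M.perp {a, b, c}) \ {b}) := by
  have hsep : M.pDiagram.IsSeparator c f Bs := hmin.1
  have hcD : c ∉ ({a, b} : Set B) ∪ M.perp {a, b, c} := by
    rintro ((rfl | rfl) | hcp)
    exacts [hc ha, hc hb, M.notMem_perp_of_mem (by simp) hcp]
  have hfD : f ∉ ({a, b} : Set B) ∪ M.perp {a, b, c} := by
    rintro ((rfl | rfl) | hfp)
    exacts [hf ha, hf hb, hsep.not_adj_s16 (M.pDiagram_adj_of_eq_two (hfp c (by simp))).symm]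
  have hadj : ∀ w ∈ ({a, b} : Set B) ∪ M.perp {a, b, c}, w ∉ Bs → M.pDiagram.Adj c w := by
    rintro w ((rfl | rfl) | hw) hwB
    exacts [absurd ha hwB, absurd hb hwB, (M.pDiagram_adj_of_eq_two (hw c (by simp))).symm]
  have hca : M.pDiagram.Adj c a :=
    hA.1.1.pDiagram_adj (by simp) (by simp) (ne_of_mem_of_not_mem ha hc).symm
  have hcb : M.pDiagram.Adj c b :=
    hA.1.1.pDiagram_adj (by simp) (by simp) (ne_of_mem_of_not_mem hb hc).symm
  exact ⟨hcD, hfD, hsep.mono hsub hcD hfD,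
    hmin.not_isSeparator_sdiff_singleton ha hcD hca hadj,
    hmin.not_isSeparator_sdiff_singleton hb hcD hcb hadj⟩

/-- **Lemma 5.8.** Let `(W,S)` be a Coxeter system with exactly one bad 5-edge. If
`Bs` is a bad separator with head `A = {a,b,c}`, eyes `{a,b}`, and good focus `f`,
then `D = {a,b} ∪ A^⊥` is a gross separator with head `A` and good focus `f`:
`c, f ∉ D`, `D` is a `(c,f)`-separator of `Γ(W,S)`, and neither `D − {a}` nor
`D − {b}` is a `(c,f)`-separator. -/
theorem grossSeparator_of_badSeparator {B : Type*} (M : CoxeterMatrix B)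
    (x y : B) (hxy : M.IsBad5Edge x y) (a b c : B) (hab : M a b = 2)
    (hA : M.IsMaxIrredSimplex {a, b, c})
    (hbad : M.IsBadSimplex (CoxeterMatrix.singleEdge x y) {a, b, c})
    (Bs : Set B) (ha : a ∈ Bs) (hb : b ∈ Bs) (hc : c ∉ Bs)
    (hsub : Bs ⊆ ({a, b} : Set B) ∪ M.perp {a, b, c})
    (f : B) (hf : f ∉ Bs) (hmin : M.pDiagram.IsMinSeparator c f Bs) :
    c ∉ ({a, b} : Set B) ∪ M.perp {a, b, c} ∧
    f ∉ ({a, b} : Set B) ∪ M.perp {a, b, c} ∧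
    M.pDiagram.IsSeparator c f (({a, b} : Set B) ∪ M.perp {a, b, c}) ∧
    ¬ M.pDiagram.IsSeparator c f ((({a, b} : Set B) ∪ M.perp {a, b, c}) \ {a}) ∧
    ¬ M.pDiagram.IsSeparator c f ((({a, b} : Set B) ∪ M.perp {a, b, c}) \ {b}) :=
  grossSeparator_of_badSeparator_general M a b c hA Bs ha hb hc hsub f hf hmin
end
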